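/- arXiv:2306.06383 — 8 statements merged into one kernel-verified Lean document; each statement's English description precedes it below -/
import Mathlib

section
/- Let n ≥ 2 and s ≥ 2, and let D be a positive basis of ℝ^n with n+s elements. Then D is an orthogonally structured positive basis if and only if there exists an ordering of the elements of D into a matrix representation D ∈ ℝ^{n×(n+s)} such that the Gram matrix G(D) = DᵀD is block diagonal with s diagonal blocks. -/
open scoped RealInnerProductSpace

noncomputable section

/-- Shorthand for the Euclidean space `ℝ^n`. -/
abbrev Euc (n : ℕ) := EuclideanSpace ℝ (Fin n)

/-- The positive span of a finite family of vectors: the set of all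
linear combinations with nonnegative coefficients. -/
def pspan {n : ℕ} {ι : Type*} [Fintype ι] (D : ι → Euc n) : Set (Euc n) :=
  { x | ∃ c : ι → ℝ, (∀ i, 0 ≤ c i) ∧ x = ∑ i, c i • D i }

/-- `D` is a positive spanning set (PSS) of the subspace `L`. -/
def IsPSS {n : ℕ} {ι : Type*} [Fintype ι] (D : ι → Euc n)
    (L : Submodule ℝ (Euc n)) : Prop :=
  pspan D = (L : Set (Euc n))

/-- `D` is a positive basis of `L`: a PSS of `L` such that removing any single
element (one instance of it) destroys the positive spanning property. -/
def IsPosBasis {n : ℕ} {ι : Type*} [Fintype ι] [DecidableEq ι] (D : ι → Euc n)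
    (L : Submodule ℝ (Euc n)) : Prop :=
  IsPSS D L ∧ ∀ i : ι, ¬ IsPSS (fun j : {j : ι // j ≠ i} => D j) L

/-- `D` is a minimal positive basis of `L`: a positive basis with `dim L + 1` elements. -/
def IsMinPosBasis {n : ℕ} {ι : Type*} [Fintype ι] [DecidableEq ι] (D : ι → Euc n)
    (L : Submodule ℝ (Euc n)) : Prop :=
  IsPosBasis D L ∧ Fintype.card ι = Module.finrank ℝ L + 1

/-- The positive `k`-span of a finite family `D`: the intersection of the positive
spans of all of its subfamilies of cardinality at least `|D| - k + 1`. -/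
def pspanK {n : ℕ} {ι : Type*} [Fintype ι] (k : ℕ) (D : ι → Euc n) : Set (Euc n) :=
  ⋂ (S : Finset ι) (_ : Fintype.card ι - k + 1 ≤ S.card),
    pspan (fun j : {j : ι // j ∈ S} => D (j : ι))

/-- `D` is a positive `k`-spanning set (PkSS) of `L`. -/
def IsPkSS {n : ℕ} {ι : Type*} [Fintype ι] (k : ℕ) (D : ι → Euc n)
    (L : Submodule ℝ (Euc n)) : Prop :=
  pspanK k D = (L : Set (Euc n))

/-- The `k`-span of a finite family `D`: the intersection of the linear spans of
all of its subfamilies of cardinality at least `|D| - k + 1`. -/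
def spanK {n : ℕ} {ι : Type*} [Fintype ι] (k : ℕ) (D : ι → Euc n) : Set (Euc n) :=
  ⋂ (S : Finset ι) (_ : Fintype.card ι - k + 1 ≤ S.card),
    (Submodule.span ℝ (D '' (S : Set ι)) : Set (Euc n))

/-- `D` is a positive `k`-basis of `L`: a PkSS of `L` such that removing any single
element destroys the positive `k`-spanning property. -/
def IsPkBasis {n : ℕ} {ι : Type*} [Fintype ι] [DecidableEq ι] (k : ℕ) (D : ι → Euc n)
    (L : Submodule ℝ (Euc n)) : Prop :=
  IsPkSS k D L ∧ ∀ i : ι, ¬ IsPkSS k (fun j : {j : ι // j ≠ i} => D j) L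

/-- The cosine measure of a finite family of nonzero vectors. -/
def cosm {n : ℕ} {ι : Type*} [Fintype ι] (D : ι → Euc n) : ℝ :=
  ⨅ u : {u : Euc n // ‖u‖ = 1}, ⨆ i : ι, ⟪(u : Euc n), D i⟫ / ‖D i‖

/-- The `k`-cosine measure of a finite family of nonzero vectors. -/
def cosmK {n : ℕ} {ι : Type*} [Fintype ι] (k : ℕ) (D : ι → Euc n) : ℝ :=
  ⨅ u : {u : Euc n // ‖u‖ = 1},
    ⨆ S : {S : Finset ι // S.card = k},
      ⨅ j : {j : ι // j ∈ (S : Finset ι)}, ⟪(u : Euc n), D (j : ι)⟫ / ‖D (j : ι)‖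

/-- The cosine vector set: the unit vectors attaining the cosine measure. -/
def cosVSet {n : ℕ} {ι : Type*} [Fintype ι] (D : ι → Euc n) : Set (Euc n) :=
  { u | ‖u‖ = 1 ∧ (⨆ i : ι, ⟪u, D i⟫ / ‖D i‖) = cosm D }

/-- `D` is orthogonally structured with decomposition given by the pairwise orthogonal
subspaces `L i` (whose sum is `ℝ^n`) and the grouping map `g`: the subfamily of `D`
corresponding to each fiber of `g` is a minimal positive basis of the associated subspace. -/
def IsOSPBDecomp {n s : ℕ} {ι : Type*} [Fintype ι] [DecidableEq ι] (D : ι → Euc n)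
    (L : Fin s → Submodule ℝ (Euc n)) (g : ι → Fin s) : Prop :=
  (∀ i i' : Fin s, i ≠ i' → ∀ x ∈ L i, ∀ y ∈ L i', ⟪x, y⟫ = 0) ∧
  (⨆ i, L i) = (⊤ : Submodule ℝ (Euc n)) ∧
  ∀ i : Fin s, IsMinPosBasis (fun j : {j : ι // g j = i} => D (j : ι)) (L i)

/-- The Gram matrix `G(B) = BᵀB` of the subfamily of `D` indexed by `S`. -/
def gramSub {n : ℕ} {ι : Type*} [Fintype ι] (D : ι → Euc n) (S : Finset ι) :
    Matrix {j : ι // j ∈ S} {j : ι // j ∈ S} ℝ :=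
  Matrix.of fun j j' => ⟪D (j : ι), D (j' : ι)⟫

/-- The quantity `γ_B = 1/√(1ᵀ G(B)⁻¹ 1)` associated with the subfamily of `D`
indexed by `S`. -/
def gammaSub {n : ℕ} {ι : Type*} [Fintype ι] [DecidableEq ι] (D : ι → Euc n)
    (S : Finset ι) : ℝ :=
  1 / Real.sqrt (∑ j : {j : ι // j ∈ S}, ∑ j' : {j : ι // j ∈ S}, (gramSub D S)⁻¹ j j')

/-- The subfamily of `D` indexed by `S` is a linear basis of `L`. -/
def IsBasisSub {n : ℕ} {ι : Type*} [Fintype ι] (D : ι → Euc n) (S : Finset ι)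
    (L : Submodule ℝ (Euc n)) : Prop :=
  LinearIndependent ℝ (fun j : {j : ι // j ∈ S} => D (j : ι)) ∧
  Submodule.span ℝ (D '' (S : Set ι)) = L

/-- `R` is a rotation matrix: `RᵀR = I` and `det R = 1`. -/
def IsRotation {n : ℕ} (R : Matrix (Fin n) (Fin n) ℝ) : Prop :=
  R.transpose * R = 1 ∧ R.det = 1

/-- Action of an `n × n` matrix on the Euclidean space `ℝ^n`. -/
def rotAct {n : ℕ} (R : Matrix (Fin n) (Fin n) ℝ) (x : Euc n) : Euc n :=
  Matrix.toEuclideanLin R x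

/-- The quantity `ρ_D` of Lemma 4.13, where `P i i'` denotes the orthogonal projection
of `d_i` onto `L ∩ {v_{i'}}^⊥`. -/
def rhoQ {n : ℕ} {ι : Type*} [Fintype ι] (D : ι → Euc n) (P : ι → ι → Euc n) : ℝ :=
  ⨆ p : ι × ι, ⟪D p.1, P p.1 p.2⟫ / (‖D p.1‖ * ‖P p.1 p.2‖)

/-! A block-diagonal Gram matrix amounts to a grouping `g` of the vectors into `s` nonempty,
mutually orthogonal classes; for an OSPB these are the minimal positive bases `D_{𝕃_i}`.
Conversely, let `𝕃_i` be the span of the `i`-th class. Splitting a nonnegative combination into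
the part from class `i` and the rest, the rest is orthogonal to `𝕃_i`, so it vanishes when the
combination lies in `𝕃_i`: each class positively spans `𝕃_i` and is a positive basis of it.
A positive spanning set of `𝕃_i ≠ 0` has at least `dim 𝕃_i + 1` elements and `∑ dim 𝕃_i ≥ n`,
so the total count `n + s` forces every class to be minimal. -/

section PositiveSpan

variable {n : ℕ} {ι : Type*} [Fintype ι]

lemma mem_pspan_self (D : ι → Euc n) (i : ι) : D i ∈ pspan D := by
  classical
  refine ⟨Pi.single i 1, fun j => ?_, ?_⟩
  · by_cases hj : j = i <;> simp [hj]
  · simp [Pi.single_apply, ite_smul]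

lemma pspan_subset_of_forall_mem {D : ι → Euc n} {L : Submodule ℝ (Euc n)}
    (h : ∀ i, D i ∈ L) : pspan D ⊆ L := by
  rintro x ⟨c, -, rfl⟩
  exact L.sum_mem fun i _ => L.smul_mem _ (h i)

lemma pspan_subset_span (D : ι → Euc n) : pspan D ⊆ Submodule.span ℝ (Set.range D) :=
  pspan_subset_of_forall_mem fun i => Submodule.subset_span ⟨i, rfl⟩

lemma add_mem_pspan {D : ι → Euc n} {x y : Euc n} (hx : x ∈ pspan D) (hy : y ∈ pspan D) :
    x + y ∈ pspan D := by
  obtain ⟨c, hc, rfl⟩ := hx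
  obtain ⟨c', hc', rfl⟩ := hy
  exact ⟨c + c', fun i => add_nonneg (hc i) (hc' i), by simp [add_smul, Finset.sum_add_distrib]⟩

lemma pspan_comp_subset {κ : Type*} [Fintype κ] (D : ι → Euc n) (f : κ → ι) :
    pspan (fun k => D (f k)) ⊆ pspan D := by
  classical
  rintro x ⟨c, hc, rfl⟩
  refine ⟨fun j => ∑ k with f k = j, c k, fun j => Finset.sum_nonneg fun k _ => hc k, ?_⟩
  rw [← Finset.sum_fiberwise_of_maps_to (fun k _ => Finset.mem_univ (f k))]
  refine Finset.sum_congr rfl fun j _ => ?_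
  rw [Finset.sum_smul]
  exact Finset.sum_congr rfl fun k hk => by dsimp only; rw [(Finset.mem_filter.mp hk).2]

lemma exists_add_of_mem_pspan (D : ι → Euc n) (p : ι → Prop) [DecidablePred p] {x : Euc n}
    (hx : x ∈ pspan D) :
    ∃ y ∈ pspan fun j : {j // p j} => D j, ∃ z ∈ pspan fun j : {j // ¬ p j} => D j,
      x = y + z := by
  obtain ⟨c, hc, rfl⟩ := hx
  refine ⟨_, ⟨fun j => c j, fun j => hc j, rfl⟩, _, ⟨fun j => c j, fun j => hc j, rfl⟩, ?_⟩
  rw [Fintype.sum_subtype_add_sum_subtype p fun j => c j • D j]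

variable {D : ι → Euc n} {L : Submodule ℝ (Euc n)}

lemma IsPSS.mem (h : IsPSS D L) (i : ι) : D i ∈ L :=
  Eq.subset h (mem_pspan_self D i)

lemma IsPSS.mem_pspan (h : IsPSS D L) {x : Euc n} (hx : x ∈ L) : x ∈ pspan D :=
  Eq.subset (Eq.symm h) hx

lemma IsPSS.span_range_eq (h : IsPSS D L) : Submodule.span ℝ (Set.range D) = L := by
  refine le_antisymm (Submodule.span_le.mpr ?_) fun x hx => pspan_subset_span D (h.mem_pspan hx)
  rintro _ ⟨i, rfl⟩
  exact h.mem i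

/-- A positive spanning set of a nonzero subspace cannot be linearly independent: `-∑ D i` is
a nonnegative combination, which would give a vanishing combination with positive coefficients. -/
lemma IsPSS.finrank_add_one_le_card (h : IsPSS D L) (hL : L ≠ ⊥) :
    Module.finrank ℝ L + 1 ≤ Fintype.card ι := by
  have hspan := h.span_range_eq
  have hle : Module.finrank ℝ L ≤ Fintype.card ι := by
    have := finrank_range_le_card (R := ℝ) D
    rwa [Set.finrank, hspan] at this
  refine Nat.succ_le_of_lt (hle.lt_of_ne fun heq => ?_)
  have hli : LinearIndependent ℝ D := by
    rw [linearIndependent_iff_card_eq_finrank_span, Set.finrank, hspan, heq]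
  obtain ⟨i⟩ : Nonempty ι := by
    by_contra hempty
    rw [not_nonempty_iff] at hempty
    exact hL (by rw [← hspan, Set.range_eq_empty, Submodule.span_empty])
  obtain ⟨c, hc, hsum⟩ := h.mem_pspan (x := -∑ j, D j) (L.neg_mem (L.sum_mem fun j _ => h.mem j))
  have hzero : ∑ j, (c j + 1) • D j = 0 := by
    simp only [add_smul, one_smul, Finset.sum_add_distrib, ← hsum, neg_add_cancel]
  have := Fintype.linearIndependent_iff.mp hli _ hzero i
  linarith [hc i]

end PositiveSpan

lemma Submodule.finrank_iSup_le_sum {K V κ : Type*} [DivisionRing K] [AddCommGroup V]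
    [Module K V] [FiniteDimensional K V] [Fintype κ] (L : κ → Submodule K V) :
    Module.finrank K ↥(⨆ i, L i) ≤ ∑ i, Module.finrank K (L i) := by
  classical
  rw [← Finset.sup_univ_eq_iSup]
  induction (Finset.univ : Finset κ) using Finset.induction with
  | empty => simp
  | insert a t ha ih =>
    rw [Finset.sup_insert, Finset.sum_insert ha]
    exact (Submodule.finrank_add_le_finrank_add_finrank _ _).trans (by omega)

section Fibers

variable {n : ℕ} {ι κ : Type*} (D : ι → Euc n) (g : ι → κ)

def fiberSpan (i : κ) : Submodule ℝ (Euc n) :=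
  Submodule.span ℝ (Set.range fun j : {j // g j = i} => D j)

lemma mem_fiberSpan (j : ι) : D j ∈ fiberSpan D g (g j) :=
  Submodule.subset_span ⟨⟨j, rfl⟩, rfl⟩

lemma iSup_fiberSpan : ⨆ i, fiberSpan D g i = Submodule.span ℝ (Set.range D) := by
  refine le_antisymm (iSup_le fun i => Submodule.span_mono ?_) (Submodule.span_le.mpr ?_)
  · rintro _ ⟨j, rfl⟩
    exact ⟨j, rfl⟩
  · rintro _ ⟨j, rfl⟩
    exact Submodule.mem_iSup_of_mem (g j) (mem_fiberSpan D g j)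

lemma span_range_subtype_isOrtho {p q : ι → Prop}
    (h : ∀ j j', p j → q j' → ⟪D j, D j'⟫ = 0) :
    Submodule.span ℝ (Set.range fun j : {j // p j} => D j) ⟂
      Submodule.span ℝ (Set.range fun j : {j // q j} => D j) := by
  rw [Submodule.isOrtho_span]
  rintro _ ⟨j, rfl⟩ _ ⟨j', rfl⟩
  exact h j j' j.2 j'.2

variable {D g}

lemma fiberSpan_isOrtho (hg : ∀ j j', g j ≠ g j' → ⟪D j, D j'⟫ = 0) {i i' : κ} (hi : i ≠ i') :
    fiberSpan D g i ⟂ fiberSpan D g i' :=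
  span_range_subtype_isOrtho D fun j j' hj hj' => hg j j' (hj ▸ hj' ▸ hi)

variable [Fintype ι] [DecidableEq κ]

lemma eq_zero_of_mem_fiberSpan_of_mem_pspan_compl
    (hg : ∀ j j', g j ≠ g j' → ⟪D j, D j'⟫ = 0) {i : κ} {z : Euc n}
    (hz : z ∈ fiberSpan D g i) (hz' : z ∈ pspan fun j : {j // g j ≠ i} => D j) : z = 0 :=
  have hortho := span_range_subtype_isOrtho D (p := fun j => g j = i) (q := fun j => g j ≠ i)
    fun j j' hj hj' => hg j j' (hj ▸ Ne.symm hj')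
  Submodule.disjoint_def.mp hortho.disjoint z hz (pspan_subset_span _ hz')

lemma IsPSS.isPSS_fiberSpan (hD : IsPSS D ⊤)
    (hg : ∀ j j', g j ≠ g j' → ⟪D j, D j'⟫ = 0) (i : κ) :
    IsPSS (fun j : {j // g j = i} => D j) (fiberSpan D g i) := by
  refine (pspan_subset_span _).antisymm fun x hx => ?_
  obtain ⟨y, hy, z, hz, rfl⟩ :=
    exists_add_of_mem_pspan D (fun j => g j = i) (hD.mem_pspan (x := x) Submodule.mem_top)
  have hyL : y ∈ fiberSpan D g i := pspan_subset_span _ hy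
  have hzL : z ∈ fiberSpan D g i := by
    simpa using (fiberSpan D g i).sub_mem hx hyL
  rwa [eq_zero_of_mem_fiberSpan_of_mem_pspan_compl hg hzL hz, add_zero]

lemma IsPSS.card_fiber_eq [Fintype κ] (hD : IsPSS D ⊤)
    (hg : ∀ j j', g j ≠ g j' → ⟪D j, D j'⟫ = 0) (h0 : ∀ j, D j ≠ 0)
    (hsurj : Function.Surjective g) (hcard : Fintype.card ι = n + Fintype.card κ) (i : κ) :
    Fintype.card {j // g j = i} = Module.finrank ℝ (fiberSpan D g i) + 1 := by
  have hge : ∀ i, Module.finrank ℝ (fiberSpan D g i) + 1 ≤ Fintype.card {j // g j = i} := by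
    intro i
    refine (hD.isPSS_fiberSpan hg i).finrank_add_one_le_card fun hbot => ?_
    obtain ⟨j, rfl⟩ := hsurj i
    exact h0 j ((Submodule.eq_bot_iff _).mp hbot _ (mem_fiberSpan D g j))
  have hdim : n ≤ ∑ i, Module.finrank ℝ (fiberSpan D g i) := by
    have := Submodule.finrank_iSup_le_sum (fiberSpan D g)
    rwa [iSup_fiberSpan, hD.span_range_eq, finrank_top, finrank_euclideanSpace_fin] at this
  have hsum : ∑ i, Fintype.card {j // g j = i} = Fintype.card ι := by
    rw [← Fintype.card_sigma, Fintype.card_congr (Equiv.sigmaFiberEquiv g)]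
  have hsum' : ∑ i, Fintype.card {j // g j = i} ≤
      ∑ i, (Module.finrank ℝ (fiberSpan D g i) + 1) := by
    rw [Finset.sum_add_distrib, hsum, hcard]
    simp only [Finset.sum_const, Finset.card_univ, smul_eq_mul, mul_one]
    omega
  exact ((Finset.sum_eq_sum_iff_of_le fun i _ => hge i).mp
    (le_antisymm (Finset.sum_le_sum fun i _ => hge i) hsum') i (Finset.mem_univ i)).symm

variable [DecidableEq ι]

/-- If the fiber without `k` still positively spanned `fiberSpan D g i`, then so would `D`
without `k`: the class-`i` part of any nonnegative combination can be rewritten avoiding `k`. -/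
lemma IsPosBasis.isPosBasis_fiberSpan (hD : IsPosBasis D ⊤)
    (hg : ∀ j j', g j ≠ g j' → ⟪D j, D j'⟫ = 0) (i : κ) :
    IsPosBasis (fun j : {j // g j = i} => D j) (fiberSpan D g i) := by
  refine ⟨hD.1.isPSS_fiberSpan hg i, fun k hk => hD.2 k ?_⟩
  refine (pspan_subset_of_forall_mem fun _ => Submodule.mem_top).antisymm fun x _ => ?_
  obtain ⟨y, hy, z, hz, rfl⟩ := exists_add_of_mem_pspan D (fun j => g j = i)
    (hD.1.mem_pspan (x := x) Submodule.mem_top)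
  refine add_mem_pspan ?_ ?_
  · have hy' : y ∈ pspan fun j : {j' : {j // g j = i} // j' ≠ k} => D j := by
      rw [hk]
      exact pspan_subset_span _ hy
    have hf : ∀ j : {j' : {j // g j = i} // j' ≠ k}, j.1.1 ≠ k := fun j h => j.2 (Subtype.ext h)
    exact pspan_comp_subset (fun j : {j // j ≠ (k : ι)} => D j) (fun j => ⟨j.1, hf j⟩) hy'
  · have hf : ∀ j : {j // ¬ g j = i}, j.1 ≠ k := fun j h => j.2 (h ▸ k.2)
    exact pspan_comp_subset (fun j : {j // j ≠ (k : ι)} => D j) (fun j => ⟨j.1, hf j⟩) hz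

lemma IsPosBasis.isOSPBDecomp_fiberSpan {s : ℕ} {g : ι → Fin s} (hD : IsPosBasis D ⊤)
    (hg : ∀ j j', g j ≠ g j' → ⟪D j, D j'⟫ = 0) (h0 : ∀ j, D j ≠ 0)
    (hsurj : Function.Surjective g) (hcard : Fintype.card ι = n + s) :
    IsOSPBDecomp D (fiberSpan D g) g := by
  refine ⟨fun i i' hi x hx y hy => (fiberSpan_isOrtho hg hi).inner_eq hx hy, ?_,
    fun i => ⟨hD.isPosBasis_fiberSpan hg i, hD.1.card_fiber_eq hg h0 hsurj ?_ i⟩⟩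
  · rw [iSup_fiberSpan, hD.1.span_range_eq]
  · rw [hcard, Fintype.card_fin]

end Fibers

section Decomp

variable {n s : ℕ} {ι : Type*} [Fintype ι] [DecidableEq ι] {D : ι → Euc n}
  {L : Fin s → Submodule ℝ (Euc n)} {g : ι → Fin s}

lemma IsOSPBDecomp.mem (h : IsOSPBDecomp D L g) (j : ι) : D j ∈ L (g j) :=
  (h.2.2 (g j)).1.1.mem ⟨j, rfl⟩

lemma IsOSPBDecomp.inner_eq_zero (h : IsOSPBDecomp D L g) {j j' : ι} (hne : g j ≠ g j') :
    ⟪D j, D j'⟫ = 0 :=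
  h.1 _ _ hne _ (h.mem j) _ (h.mem j')

lemma IsOSPBDecomp.surjective (h : IsOSPBDecomp D L g) : Function.Surjective g := fun i =>
  have hpos : 0 < Fintype.card {j // g j = i} := by rw [(h.2.2 i).2]; omega
  let ⟨⟨j, hj⟩⟩ := Fintype.card_pos_iff.mp hpos
  ⟨j, hj⟩

end Decomp

lemma exists_perm_monotone_iff_exists_surjective {m s : ℕ} (P : Fin m → Fin m → Prop) :
    (∃ (σ : Equiv.Perm (Fin m)) (b : Fin m → Fin s), Monotone b ∧ Function.Surjective b ∧
      ∀ j j', b j ≠ b j' → P (σ j) (σ j')) ↔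
    ∃ g : Fin m → Fin s, Function.Surjective g ∧ ∀ j j', g j ≠ g j' → P j j' := by
  constructor
  · rintro ⟨σ, b, -, hb, hP⟩
    refine ⟨b ∘ σ.symm, hb.comp σ.symm.surjective, fun j j' hne => ?_⟩
    simpa using hP (σ.symm j) (σ.symm j') hne
  · rintro ⟨g, hg, hP⟩
    exact ⟨Tuple.sort g, g ∘ Tuple.sort g, Tuple.monotone_sort g,
      hg.comp (Tuple.sort g).surjective, fun j j' hne => hP _ _ hne⟩

theorem ospb_iff_gram_block_diagonal_general {n s : ℕ}
    (D : Fin (n + s) → Euc n) (h0 : ∀ i, D i ≠ 0)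
    (hD : IsPosBasis D (⊤ : Submodule ℝ (Euc n))) :
    (∃ (L : Fin s → Submodule ℝ (Euc n)) (g : Fin (n + s) → Fin s),
        IsOSPBDecomp D L g) ↔
      ∃ (σ : Equiv.Perm (Fin (n + s))) (b : Fin (n + s) → Fin s),
        Monotone b ∧ Function.Surjective b ∧
        ∀ j j' : Fin (n + s), b j ≠ b j' → ⟪D (σ j), D (σ j')⟫ = 0 := by
  rw [exists_perm_monotone_iff_exists_surjective fun j j' => ⟪D j, D j'⟫ = 0]
  constructor
  · rintro ⟨L, g, h⟩
    exact ⟨g, h.surjective, fun j j' => h.inner_eq_zero⟩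
  · rintro ⟨g, hsurj, hg⟩
    exact ⟨fiberSpan D g, g, hD.isOSPBDecomp_fiberSpan hg h0 hsurj (Fintype.card_fin _)⟩

/-- Theorem 3.2: a positive basis of `ℝ^n` with `n+s` elements
(`n, s ≥ 2`) is orthogonally structured iff one of its Gram matrices (i.e. the Gram
matrix of some reordering of its elements) is block diagonal with `s` diagonal blocks. -/
theorem ospb_iff_gram_block_diagonal {n s : ℕ} (hn : 2 ≤ n) (hs : 2 ≤ s)
    (D : Fin (n + s) → Euc n) (h0 : ∀ i, D i ≠ 0)
    (hD : IsPosBasis D (⊤ : Submodule ℝ (Euc n))) :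
    (∃ (L : Fin s → Submodule ℝ (Euc n)) (g : Fin (n + s) → Fin s),
        IsOSPBDecomp D L g) ↔
      ∃ (σ : Equiv.Perm (Fin (n + s))) (b : Fin (n + s) → Fin s),
        Monotone b ∧ Function.Surjective b ∧
        ∀ j j' : Fin (n + s), b j ≠ b j' → ⟪D (σ j), D (σ j')⟫ = 0 :=
  ospb_iff_gram_block_diagonal_general D h0 hD
end
end

section
/- Let D be an orthogonally structured positive basis of ℝ^n with decomposition D = D_{𝕃_1} ∪ ⋯ ∪ D_{𝕃_s} into minimal positive bases of pairwise orthogonal subspaces 𝕃_1,…,𝕃_s. Let B = B_{𝕃_1} ∪ ⋯ ∪ B_{𝕃_s}, where each B_{𝕃_i} ⊆ D_{𝕃_i} is a linear basis of 𝕃_i, so that B is a linear basis of ℝ^n. Then γ_B = 1/√( Σ_{i=1}^s γ_{B_{𝕃_i}}^{-2} ) = 1/√( Σ_{i=1}^s 1_{𝕃_i}ᵀ G(B_{𝕃_i})⁻¹ 1_{𝕃_i} ), where γ_{B_{𝕃_i}} = 1/√(1_{𝕃_i}ᵀ G(B_{𝕃_i})⁻¹ 1_{𝕃_i}), B_{𝕃_i}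 is a matrix representation of B_{𝕃_i}, and 1_{𝕃_i} is the all-ones vector in ℝ^{dim 𝕃_i}. -/
open scoped RealInnerProductSpace

noncomputable section

/-!
The Gram matrix of `B` is block diagonal, with the Gram matrices of the `B_{𝕃_i}` as blocks,
because vectors taken from different `𝕃_i` are orthogonal. Its inverse is therefore block
diagonal with the inverses of those blocks, so `1ᵀ G(B)⁻¹ 1` splits as the sum of the
`1ᵀ G(B_{𝕃_i})⁻¹ 1`. Each of these is nonnegative, `G(B_{𝕃_i})` being positive definite, which
turns `γ_{B_{𝕃_i}} = 1/√(1ᵀ G(B_{𝕃_i})⁻¹ 1)` into `γ_{B_{𝕃_i}}⁻² = 1ᵀ G(B_{𝕃_i})⁻¹ 1`.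
-/

open scoped InnerProductSpace ComplexOrder
open Function

namespace Matrix

section BlockDiagonal

variable {ι : Type*} [Fintype ι] [DecidableEq ι] {κ : ι → Type*} [∀ i, Fintype (κ i)]

theorem sum_sum_blockDiagonal' {α : Type*} [AddCommMonoid α] (A : ∀ i, Matrix (κ i) (κ i) α) :
    ∑ a, ∑ b, blockDiagonal' A a b = ∑ i, ∑ a, ∑ b, A i a b := by
  simp only [Fintype.sum_sigma]
  refine Finset.sum_congr rfl fun i _ => Finset.sum_congr rfl fun a _ => ?_
  rw [Fintype.sum_eq_single i fun j hj => Finset.sum_eq_zero fun b _ =>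
    blockDiagonal'_apply_ne A a b (Ne.symm hj)]
  simp only [blockDiagonal'_apply_eq]

theorem inv_blockDiagonal' [∀ i, DecidableEq (κ i)] {α : Type*} [CommRing α]
    {A : ∀ i, Matrix (κ i) (κ i) α} (hA : ∀ i, IsUnit (A i).det) :
    (blockDiagonal' A)⁻¹ = blockDiagonal' fun i => (A i)⁻¹ :=
  inv_eq_right_inv <| by
    simp only [← blockDiagonal'_mul, mul_nonsing_inv _ (hA _)]
    exact blockDiagonal'_one

end BlockDiagonal

theorem sum_sum_submatrix_equiv {m n α : Type*} [Fintype m] [Fintype n] [AddCommMonoid α]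
    (A : Matrix m m α) (e : n ≃ m) :
    ∑ a, ∑ b, A.submatrix e e a b = ∑ a, ∑ b, A a b := by
  simp only [submatrix_apply, Equiv.sum_comp]
  exact e.sum_comp fun a => ∑ b, A a b

theorem PosSemidef.sum_sum_nonneg {n : Type*} [Fintype n] {A : Matrix n n ℝ}
    (hA : A.PosSemidef) : 0 ≤ ∑ a, ∑ b, A a b := by
  simpa [dotProduct, mulVec] using hA.dotProduct_mulVec_nonneg 1

section Gram

variable {𝕜 E : Type*} [RCLike 𝕜] [NormedAddCommGroup E] [InnerProductSpace 𝕜 E]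

theorem gram_sigma_eq_blockDiagonal' {ι : Type*} [DecidableEq ι] {κ : ι → Type*}
    (v : (Σ i, κ i) → E) (horth : ∀ x y, x.1 ≠ y.1 → ⟪v x, v y⟫_𝕜 = 0) :
    gram 𝕜 v = blockDiagonal' fun i => gram 𝕜 fun a => v ⟨i, a⟩ := by
  ext ⟨i, a⟩ ⟨j, b⟩
  by_cases hij : i = j
  · subst hij
    rw [blockDiagonal'_apply_eq]
    rfl
  · rw [blockDiagonal'_apply_ne _ _ _ hij]
    exact horth _ _ hij

theorem sum_sum_inv_gram_sigma {ι : Type*} [Fintype ι] [DecidableEq ι] {κ : ι → Type*}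
    [∀ i, Fintype (κ i)] [∀ i, DecidableEq (κ i)]
    (v : (Σ i, κ i) → E) (horth : ∀ x y, x.1 ≠ y.1 → ⟪v x, v y⟫_𝕜 = 0)
    (hli : ∀ i, LinearIndependent 𝕜 fun a => v ⟨i, a⟩) :
    ∑ x, ∑ y, (gram 𝕜 v)⁻¹ x y = ∑ i, ∑ a, ∑ b, (gram 𝕜 fun a => v ⟨i, a⟩)⁻¹ a b := by
  rw [gram_sigma_eq_blockDiagonal' v horth,
    inv_blockDiagonal' fun i =>
      (isUnit_iff_isUnit_det _).1 (posDef_gram_of_linearIndependent (hli i)).isUnit,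
    sum_sum_blockDiagonal']

end Gram

end Matrix

def Finset.sigmaEquivBiUnion {ι α : Type*} [Fintype ι] [DecidableEq α] (T : ι → Finset α)
    (hT : Pairwise (Disjoint on T)) : (Σ i, T i) ≃ Finset.univ.biUnion T :=
  Equiv.ofBijective (fun x => ⟨x.2, Finset.mem_biUnion.2 ⟨x.1, Finset.mem_univ _, x.2.2⟩⟩) <| by
    refine ⟨fun x y hxy => ?_, fun j => ?_⟩
    · have hj : (x.2 : α) = y.2 := congrArg Subtype.val hxy
      refine Sigma.subtype_ext ?_ hj
      by_contra hne
      exact Finset.disjoint_left.1 (hT hne) x.2.2 (hj ▸ y.2.2)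
    · obtain ⟨i, -, hi⟩ := Finset.mem_biUnion.1 j.2
      exact ⟨⟨i, j, hi⟩, rfl⟩

theorem inv_sq_gammaSub {n : ℕ} {ι : Type*} [Fintype ι] [DecidableEq ι] (D : ι → Euc n)
    (S : Finset ι) (hli : LinearIndependent ℝ fun j : S => D j) :
    (gammaSub D S ^ 2)⁻¹ = ∑ j, ∑ j', (gramSub D S)⁻¹ j j' := by
  have hnonneg : 0 ≤ ∑ j, ∑ j', (gramSub D S)⁻¹ j j' :=
    (Matrix.posDef_gram_of_linearIndependent hli).inv.posSemidef.sum_sum_nonneg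
  rw [gammaSub, div_pow, one_pow, Real.sq_sqrt hnonneg, one_div, inv_inv]

theorem gamma_of_ospb_basis_decomp_general {n s : ℕ}
    (D : Fin (n + s) → Euc n)
    (L : Fin s → Submodule ℝ (Euc n)) (g : Fin (n + s) → Fin s)
    (hospb : IsOSPBDecomp D L g)
    (T : Fin s → Finset (Fin (n + s)))
    (hTfib : ∀ i : Fin s, ∀ j ∈ T i, g j = i)
    (hTbasis : ∀ i : Fin s, IsBasisSub D (T i) (L i)) :
    gammaSub D (Finset.univ.biUnion T)
      = 1 / Real.sqrt (∑ i : Fin s, ((gammaSub D (T i)) ^ 2)⁻¹) ∧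
    gammaSub D (Finset.univ.biUnion T)
      = 1 / Real.sqrt (∑ i : Fin s,
          ∑ j : {j : Fin (n + s) // j ∈ T i}, ∑ j' : {j : Fin (n + s) // j ∈ T i},
            (gramSub D (T i))⁻¹ j j') := by
  have hdisj : Pairwise (Disjoint on T) := fun i i' hne =>
    Finset.disjoint_left.2 fun j hi hi' => hne ((hTfib i j hi).symm.trans (hTfib i' j hi'))
  have hmem : ∀ i, ∀ j ∈ T i, D j ∈ L i := fun i j hj =>
    (hTbasis i).2 ▸ Submodule.subset_span ⟨j, hj, rfl⟩
  have hsplit : ∑ j, ∑ j', (gramSub D (Finset.univ.biUnion T))⁻¹ j j'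
      = ∑ i, ∑ j, ∑ j', (gramSub D (T i))⁻¹ j j' := by
    -- `gramSub D S` is definitionally the `gram` matrix of the subfamily indexed by `S`
    rw [← Matrix.sum_sum_submatrix_equiv _ (Finset.sigmaEquivBiUnion T hdisj),
      ← Matrix.inv_submatrix_equiv]
    exact Matrix.sum_sum_inv_gram_sigma (𝕜 := ℝ) (fun x : Σ i, T i => D x.2)
      (fun x y hne => hospb.1 _ _ hne _ (hmem _ _ x.2.2) _ (hmem _ _ y.2.2))
      fun i => (hTbasis i).1
  have hblocks : ∑ i, (gammaSub D (T i) ^ 2)⁻¹ = ∑ i, ∑ j, ∑ j', (gramSub D (T i))⁻¹ j j' :=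
    Finset.sum_congr rfl fun i _ => inv_sq_gammaSub D (T i) (hTbasis i).1
  rw [hblocks, gammaSub, hsplit]
  exact ⟨rfl, rfl⟩

/-- first part of Theorem 3.5: for an OSPB `D` decomposed into
minimal positive bases `D_{𝕃_i}` (fibers of `g`), and a linear basis `B ⊆ D` of `ℝ^n`
obtained as the union of linear bases `B_{𝕃_i} ⊆ D_{𝕃_i}` of the subspaces `𝕃_i`
(indexed by the finsets `T i`), one has
`γ_B = 1/√(Σ_i γ_{B_{𝕃_i}}⁻²) = 1/√(Σ_i 1ᵀ G(B_{𝕃_i})⁻¹ 1)`. -/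
theorem gamma_of_ospb_basis_decomp {n s : ℕ}
    (D : Fin (n + s) → Euc n) (h0 : ∀ i, D i ≠ 0)
    (L : Fin s → Submodule ℝ (Euc n)) (g : Fin (n + s) → Fin s)
    (hospb : IsOSPBDecomp D L g)
    (T : Fin s → Finset (Fin (n + s)))
    (hTfib : ∀ i : Fin s, ∀ j ∈ T i, g j = i)
    (hTbasis : ∀ i : Fin s, IsBasisSub D (T i) (L i)) :
    gammaSub D (Finset.univ.biUnion T)
      = 1 / Real.sqrt (∑ i : Fin s, ((gammaSub D (T i)) ^ 2)⁻¹) ∧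
    gammaSub D (Finset.univ.biUnion T)
      = 1 / Real.sqrt (∑ i : Fin s,
          ∑ j : {j : Fin (n + s) // j ∈ T i}, ∑ j' : {j : Fin (n + s) // j ∈ T i},
            (gramSub D (T i))⁻¹ j j') :=
  gamma_of_ospb_basis_decomp_general D L g hospb T hTfib hTbasis
end
end

section
/- Let n ≥ 2 and let D = {e_1, …, e_n, -1_n}, where e_1,…,e_n are the standard coordinate vectors of ℝ^n and 1_n is the all-ones vector. Then the cosine measure of D is cm(D) = 1/√(n² + 2(n-1)√n). -/
open scoped RealInnerProductSpace

noncomputable section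

/-!
For a unit vector `u` let `m` be the largest of `u₁, …, uₙ, -(∑ uᵢ)/√n`. The slack
`s = ∑ (m - uᵢ)` lies in `[0, m (n + √n)]`, and `1 = ∑ uᵢ² ≤ n m² - 2 m s + s²`. The
right-hand side is convex in `s`, hence at most its value `m² (n² + 2 (n - 1) √n)` at
`s = m (n + √n)`. The bound is attained by `u` proportional to `𝟙 - (n + √n) e₁`.
-/

theorem cosm_eq_of_forall_le_of_exists {n : ℕ} {ι : Type*} [Fintype ι] {D : ι → Euc n}
    {c : ℝ}
    (hlow : ∀ u : Euc n, ‖u‖ = 1 → c ≤ ⨆ i, ⟪u, D i⟫ / ‖D i‖)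
    (hopt : ∃ u : Euc n, ‖u‖ = 1 ∧ (⨆ i, ⟪u, D i⟫ / ‖D i‖) ≤ c) :
    cosm D = c := by
  obtain ⟨u₀, hu₀, hc⟩ := hopt
  have : Nonempty {u : Euc n // ‖u‖ = 1} := ⟨⟨u₀, hu₀⟩⟩
  have hbdd : BddBelow (Set.range fun u : {u : Euc n // ‖u‖ = 1} =>
      ⨆ i, ⟪(u : Euc n), D i⟫ / ‖D i‖) :=
    ⟨c, Set.forall_mem_range.2 fun u => hlow u u.2⟩
  exact le_antisymm (ciInf_le_of_le hbdd ⟨u₀, hu₀⟩ hc) (le_ciInf fun u => hlow u u.2)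

theorem EuclideanSpace.inner_sum_single_one {n : ℕ} (u : Euc n) :
    ⟪u, ∑ i, EuclideanSpace.single i (1 : ℝ)⟫ = ∑ i, u i := by
  simp [inner_sum, EuclideanSpace.inner_single_right]

theorem EuclideanSpace.norm_sum_single_one (n : ℕ) :
    ‖∑ i : Fin n, EuclideanSpace.single i (1 : ℝ)‖ = √n := by
  rw [norm_eq_sqrt_real_inner, EuclideanSpace.inner_sum_single_one]
  simp

theorem iSup_inner_div_norm_le_iff {n : ℕ} {D : Fin (n + 1) → Euc n}
    (hcoord : ∀ i : Fin n, D i.castSucc = EuclideanSpace.single i (1 : ℝ))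
    (hlast : D (Fin.last n) = -∑ i : Fin n, EuclideanSpace.single i (1 : ℝ))
    (u : Euc n) (m : ℝ) :
    (⨆ i, ⟪u, D i⟫ / ‖D i‖) ≤ m ↔ (∀ i, u i ≤ m) ∧ -(∑ i, u i) / √n ≤ m := by
  rw [ciSup_le_iff (Finite.bddAbove_range _), Fin.forall_fin_succ']
  simp [hcoord, hlast, EuclideanSpace.inner_single_right, EuclideanSpace.inner_sum_single_one,
    EuclideanSpace.norm_sum_single_one]

theorem canonical_const_pos {n : ℕ} (hn : 0 < n) :
    0 < (n : ℝ) ^ 2 + 2 * ((n : ℝ) - 1) * √n := by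
  have hn1 : (1 : ℝ) ≤ n := by exact_mod_cast hn
  have : 0 ≤ ((n : ℝ) - 1) * √n := mul_nonneg (by linarith) (Real.sqrt_nonneg _)
  nlinarith

theorem norm_le_of_forall_le_of_neg_sum_le {n : ℕ} (hn : 0 < n) {u : Euc n} {m : ℝ}
    (hle : ∀ i, u i ≤ m) (hsum : -(∑ i, u i) / √n ≤ m) :
    ‖u‖ ≤ m * √((n : ℝ) ^ 2 + 2 * ((n : ℝ) - 1) * √n) := by
  have hn1 : (1 : ℝ) ≤ n := by exact_mod_cast hn
  have hsqrt : √(n : ℝ) ^ 2 = n := Real.sq_sqrt (Nat.cast_nonneg n)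
  have hsqrt1 : 1 ≤ √(n : ℝ) := Real.one_le_sqrt.2 hn1
  have hsum' : -(∑ i, u i) ≤ m * √n := (div_le_iff₀ (by positivity)).1 hsum
  set s := ∑ i, (m - u i) with hs
  have hs_eq : s = n * m - ∑ i, u i := by simp [hs, Finset.sum_sub_distrib]
  have hs_nonneg : 0 ≤ s := Finset.sum_nonneg fun i _ => sub_nonneg.2 (hle i)
  have hm : 0 ≤ m := by nlinarith
  have hslack_sq : ∑ i, (m - u i) ^ 2 ≤ s ^ 2 :=
    Finset.sum_sq_le_sq_sum_of_nonneg fun i _ => sub_nonneg.2 (hle i)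
  have hexpand : ∑ i, u i ^ 2 = n * m ^ 2 - 2 * m * s + ∑ i, (m - u i) ^ 2 := by
    rw [Finset.sum_congr rfl fun i _ =>
      show u i ^ 2 = m ^ 2 - 2 * m * (m - u i) + (m - u i) ^ 2 by ring]
    simp [Finset.sum_add_distrib, Finset.sum_sub_distrib, ← Finset.mul_sum, ← hs]
  have hsq : ∑ i, u i ^ 2 ≤ (m * √((n : ℝ) ^ 2 + 2 * ((n : ℝ) - 1) * √n)) ^ 2 := by
    rw [mul_pow, Real.sq_sqrt (canonical_const_pos hn).le]
    nlinarith [mul_nonneg (sub_nonneg.2 (show s ≤ m * (n + √n) by nlinarith))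
      (show 0 ≤ s + m * (n + √n) - 2 * m by nlinarith)]
  rw [EuclideanSpace.norm_eq]
  refine Real.sqrt_le_iff.2 ⟨by positivity, ?_⟩
  simpa only [Real.norm_eq_abs, sq_abs] using hsq

theorem exists_norm_eq_one_forall_le_of_neg_sum_eq {n : ℕ} (hn : 0 < n) :
    ∃ u : Euc n, ‖u‖ = 1 ∧
      (∀ i, u i ≤ 1 / √((n : ℝ) ^ 2 + 2 * ((n : ℝ) - 1) * √n)) ∧
      -(∑ i, u i) / √n = 1 / √((n : ℝ) ^ 2 + 2 * ((n : ℝ) - 1) * √n) := by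
  set K : ℝ := (n : ℝ) ^ 2 + 2 * ((n : ℝ) - 1) * √n
  have hsqrt : √(n : ℝ) ^ 2 = n := Real.sq_sqrt (Nat.cast_nonneg n)
  have hK : 0 < √K := Real.sqrt_pos.2 (canonical_const_pos hn)
  set one : Euc n := ∑ i, EuclideanSpace.single i (1 : ℝ)
  set e : Euc n := EuclideanSpace.single ⟨0, hn⟩ (1 : ℝ)
  set w : Euc n := one - (n + √n) • e
  have h_one_e : ⟪one, e⟫ = 1 := by simp [one, e, EuclideanSpace.inner_single_right]
  have h_one_one : ⟪one, one⟫ = n := by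
    rw [real_inner_self_eq_norm_sq, EuclideanSpace.norm_sum_single_one, hsqrt]
  have hw_sum : ∑ i, w i = -√n := by
    rw [← EuclideanSpace.inner_sum_single_one]
    change ⟪w, one⟫ = _
    rw [inner_sub_left, real_inner_smul_left, real_inner_comm one e, h_one_e, h_one_one]
    ring
  have hw_norm : ‖w‖ = √K := by
    rw [← Real.sqrt_sq (norm_nonneg w), norm_sub_sq_real, real_inner_smul_right, norm_smul,
      EuclideanSpace.norm_sum_single_one, PiLp.norm_single, h_one_e]
    congr 1
    simp only [Real.norm_eq_abs, norm_one, mul_one,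
      abs_of_nonneg (by positivity : 0 ≤ (n : ℝ) + √n)]
    nlinarith
  refine ⟨(√K)⁻¹ • w, ?_, fun i => ?_, ?_⟩
  · rw [norm_smul, hw_norm, norm_inv, Real.norm_of_nonneg hK.le, inv_mul_cancel₀ hK.ne']
  · have hwi : w i ≤ 1 := by
      have h_one : one i = 1 := by simp [one]
      have h_e : 0 ≤ e i := by simp [e, PiLp.single_apply, apply_ite]
      simp only [w, PiLp.sub_apply, PiLp.smul_apply, smul_eq_mul, h_one]
      nlinarith [mul_nonneg (by positivity : 0 ≤ (n : ℝ) + √n) h_e]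
    simpa [div_eq_inv_mul] using mul_le_mul_of_nonneg_left hwi (inv_nonneg.2 hK.le)
  · simp only [PiLp.smul_apply, smul_eq_mul, ← Finset.mul_sum, hw_sum]
    field_simp

/-- Lemma 3.6: the cosine measure of the minimal positive basis
`{e_1, …, e_n, -1_n}` of `ℝ^n` (`n ≥ 2`) equals `1/√(n² + 2(n-1)√n)`. -/
theorem cosm_canonical_minimal_basis {n : ℕ} (hn : 2 ≤ n)
    (D : Fin (n + 1) → Euc n)
    (hcoord : ∀ i : Fin n, D i.castSucc = EuclideanSpace.single i (1 : ℝ))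
    (hlast : D (Fin.last n) = -∑ i : Fin n, EuclideanSpace.single i (1 : ℝ)) :
    cosm D = 1 / Real.sqrt ((n : ℝ) ^ 2 + 2 * ((n : ℝ) - 1) * Real.sqrt (n : ℝ)) := by
  have hn0 : 0 < n := by omega
  have hK := Real.sqrt_pos.2 (canonical_const_pos hn0)
  apply cosm_eq_of_forall_le_of_exists
  · intro u hu
    obtain ⟨hle, hsum⟩ := (iSup_inner_div_norm_le_iff hcoord hlast u _).1 le_rfl
    have hnorm := norm_le_of_forall_le_of_neg_sum_le hn0 hle hsum
    rw [hu] at hnorm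
    rwa [div_le_iff₀ hK]
  · obtain ⟨u, hu, hle, hsum⟩ := exists_norm_eq_one_forall_le_of_neg_sum_eq hn0
    exact ⟨u, hu, (iSup_inner_div_norm_le_iff hcoord hlast u _).2 ⟨hle, hsum.le⟩⟩
end
end

section
/- Let 𝕃 be a linear subspace of ℝ^n and let the finite family D of nonzero vectors in 𝕃 be a positive k-spanning set of 𝕃. Then for every d ∈ D, the k-span of the family D \ {d} (obtained by removing one instance of d) equals 𝕃. -/
open scoped RealInnerProductSpace

noncomputable section

/-! Removing `d` from an admissible subfamily `S ∋ d` of `D` does not change its linear span: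
`-d ∈ 𝕃 ⊆ pspan S` gives `-d = c • d + w` with `c ≥ 0` and `w` a nonnegative combination of
`S \ {d}`, so `d ∈ span (S \ {d})` because `1 + c ≠ 0`. Every admissible subfamily of `D \ {d}`
is of the form `S \ {d}`, whence `𝕃 ⊆ span_k (D \ {d})`. The reverse inclusion uses the whole
family `D \ {d}`, which is nonempty because a single nonzero vector `d` does not positively span
a subspace containing `-d`. -/

section

variable {n : ℕ} {ι : Type*}

lemma pspan_subset_span_image (D : ι → Euc n) (S : Finset ι) :
    pspan (fun j : S => D j) ⊆ (Submodule.span ℝ (D '' S) : Set (Euc n)) := by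
  rintro x ⟨c, -, rfl⟩
  exact Submodule.sum_mem _ fun j _ =>
    Submodule.smul_mem _ _ (Submodule.subset_span ⟨j, j.2, rfl⟩)

lemma mem_span_erase_of_neg_mem_pspan [DecidableEq ι] {D : ι → Euc n} {S : Finset ι} {i : ι}
    (hi : i ∈ S) (h : -D i ∈ pspan (fun j : S => D j)) :
    D i ∈ Submodule.span ℝ (D '' ↑(S.erase i)) := by
  obtain ⟨c, hc, hsum⟩ := h
  set p := Submodule.span ℝ (D '' ↑(S.erase i))
  set w := ∑ j ∈ Finset.univ.erase ⟨i, hi⟩, c j • D j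
  have hw : w ∈ p := Submodule.sum_mem _ fun j hj => Submodule.smul_mem _ _ <|
    Submodule.subset_span
      ⟨j, Finset.mem_erase.2 ⟨fun h => (Finset.mem_erase.1 hj).1 (Subtype.ext h), j.2⟩, rfl⟩
  rw [← Finset.add_sum_erase _ _ (Finset.mem_univ ⟨i, hi⟩)] at hsum
  have hsmul : (c ⟨i, hi⟩ + 1) • D i = -w := by
    linear_combination (norm := module) -hsum
  have hpos : c ⟨i, hi⟩ + 1 ≠ 0 := by have := hc ⟨i, hi⟩; positivity
  rw [← Submodule.smul_mem_iff p hpos, hsmul]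
  exact neg_mem hw

variable [Fintype ι] {k : ℕ} {D : ι → Euc n}

lemma pspanK_subset_pspan {S : Finset ι} (hS : Fintype.card ι - k + 1 ≤ S.card) :
    pspanK k D ⊆ pspan (fun j : S => D j) :=
  Set.iInter₂_subset S hS

lemma spanK_subset_span {S : Finset ι} (hS : Fintype.card ι - k + 1 ≤ S.card) :
    spanK k D ⊆ (Submodule.span ℝ (D '' S) : Set (Euc n)) :=
  Set.iInter₂_subset S hS

lemma spanK_subset_span_range [Nonempty ι] (hk : 1 ≤ k) :
    spanK k D ⊆ (Submodule.span ℝ (Set.range D) : Set (Euc n)) := by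
  have hpos : 0 < Fintype.card ι := Fintype.card_pos
  rw [← Set.image_univ, ← Finset.coe_univ]
  exact spanK_subset_span (by rw [Finset.card_univ]; omega)

variable [DecidableEq ι] {L : Submodule ℝ (Euc n)}

lemma IsPkSS.le_span_erase (hD : IsPkSS k D L) (hmem : ∀ i, D i ∈ L) {S : Finset ι}
    (hS : Fintype.card ι - k + 1 ≤ S.card) {i : ι} (hi : i ∈ S) :
    L ≤ Submodule.span ℝ (D '' ↑(S.erase i)) := by
  have hsub : (L : Set (Euc n)) ⊆ pspan (fun j : S => D j) := hD ▸ pspanK_subset_pspan hS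
  have hDi := mem_span_erase_of_neg_mem_pspan hi (hsub (neg_mem (hmem i)))
  intro x hx
  have hx' := pspan_subset_span_image D S (hsub hx)
  rwa [← Finset.insert_erase hi, Finset.coe_insert, Set.image_insert_eq,
    Submodule.span_insert_eq_span hDi] at hx'

lemma IsPkSS.nontrivial [Nonempty ι] (hD : IsPkSS k D L) (hmem : ∀ i, D i ∈ L)
    (h0 : ∀ i, D i ≠ 0) (hk : 1 ≤ k) : Nontrivial ι := by
  obtain ⟨i⟩ := ‹Nonempty ι›
  by_contra htriv
  have : Subsingleton ι := not_nontrivial_iff_subsingleton.1 htriv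
  have hcard : Fintype.card ι = 1 := Fintype.card_eq_one_iff.2 ⟨i, fun j => Subsingleton.elim j i⟩
  have hS : Fintype.card ι - k + 1 ≤ ({i} : Finset ι).card := by
    rw [hcard, Finset.card_singleton]; omega
  have h := hD.le_span_erase hmem hS (Finset.mem_singleton_self i) (hmem i)
  rw [Finset.erase_singleton, Finset.coe_empty, Set.image_empty, Submodule.span_empty,
    Submodule.mem_bot] at h
  exact h0 i h

lemma IsPkSS.subset_spanK_erase (hD : IsPkSS k D L) (hmem : ∀ i, D i ∈ L) (i₀ : ι) :
    (L : Set (Euc n)) ⊆ spanK k (fun j : {j : ι // j ≠ i₀} => D j) := by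
  intro x hx
  refine Set.mem_iInter₂.2 fun S hS => ?_
  set T := S.map (Function.Embedding.subtype _)
  have hi₀ : i₀ ∉ T := by simp [T]
  have hST : (fun j : {j : ι // j ≠ i₀} => D j) '' S = D '' ↑((insert i₀ T).erase i₀) := by
    rw [Finset.erase_insert hi₀, Finset.coe_map, Set.image_image]; rfl
  have hcard : Fintype.card {j : ι // j ≠ i₀} = Fintype.card ι - 1 := by simp
  rw [hST]
  refine hD.le_span_erase hmem ?_ (Finset.mem_insert_self i₀ T) hx
  rw [Finset.card_insert_of_notMem hi₀, Finset.card_map]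
  omega

end

/-- Lemma 4.4: if `D` is a positive `k`-spanning set of `L`, then
for every `d ∈ D` the `k`-span of the family obtained by removing one instance of
`d` equals `L`. -/
theorem kspan_of_pkss_erase {n : ℕ} {ι : Type*} [Fintype ι] [DecidableEq ι]
    (L : Submodule ℝ (Euc n)) (D : ι → Euc n)
    (hmem : ∀ i, D i ∈ L) (h0 : ∀ i, D i ≠ 0)
    (k : ℕ) (hk : 1 ≤ k) (hD : IsPkSS k D L) (i₀ : ι) :
    spanK k (fun j : {j : ι // j ≠ i₀} => D (j : ι)) = (L : Set (Euc n)) := by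
  refine subset_antisymm ?_ (hD.subset_spanK_erase hmem i₀)
  have : Nonempty ι := ⟨i₀⟩
  have : Nontrivial ι := hD.nontrivial hmem h0 hk
  obtain ⟨j, hj⟩ := exists_ne i₀
  have : Nonempty {j : ι // j ≠ i₀} := ⟨⟨j, hj⟩⟩
  refine (spanK_subset_span_range hk).trans ?_
  exact Submodule.span_le.2 (by rintro _ ⟨j, rfl⟩; exact hmem j)
end
end

section
/- Let D be a finite family of nonzero vectors in ℝ^n and let k be an integer with 1 ≤ k ≤ |D|. Then D is a positive k-spanning set of ℝ^n if and only if cm_k(D) > 0. -/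
/-! Both conditions say that every `u ≠ 0` makes a positive inner product with at least `k` of
the `D i`. For the positive `k`-span this combines two facts: a family positively spans `ℝ^n` iff
every `u ≠ 0` has positive inner product with one of its members (separate a point missing from
the positive span from the interior of that cone, which is nonempty because the family spans
linearly), and every subfamily of size at least `|D| - k + 1` meets a set `T` iff `|T| ≥ k`.
For the cosine measure, `cosmKAt k D` is a finite max-min of continuous functions, so its
infimum over the compact unit sphere is attained, and positivity at a unit vector is exactly
the counting condition. -/

open scoped RealInnerProductSpace

noncomputable section

open Finset

lemma lt_ciInf_iff_of_finite {α β : Type*} [Finite α] [Nonempty α]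
    [ConditionallyCompleteLinearOrder β] {f : α → β} {a : β} :
    a < ⨅ i, f i ↔ ∀ i, a < f i := by
  refine ⟨fun h i => h.trans_le (ciInf_le (Set.finite_range f).bddBelow i), fun h => ?_⟩
  obtain ⟨i, hi⟩ := exists_eq_ciInf_of_finite (f := f)
  exact hi ▸ h i

lemma continuous_ciSup_of_finite {α X : Type*} [Finite α] [TopologicalSpace X]
    {f : α → X → ℝ} (hf : ∀ i, Continuous (f i)) : Continuous fun x => ⨆ i, f i x := by
  cases isEmpty_or_nonempty α
  · simpa only [Real.iSup_of_isEmpty] using continuous_const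
  have := Fintype.ofFinite α
  simp_rw [← Finset.sup'_univ_eq_ciSup]
  exact Continuous.finset_sup'_apply univ_nonempty fun i _ => hf i

lemma continuous_ciInf_of_finite {α X : Type*} [Finite α] [TopologicalSpace X]
    {f : α → X → ℝ} (hf : ∀ i, Continuous (f i)) : Continuous fun x => ⨅ i, f i x := by
  cases isEmpty_or_nonempty α
  · simpa only [Real.iInf_of_isEmpty] using continuous_const
  have := Fintype.ofFinite α
  simp_rw [← Finset.inf'_univ_eq_ciInf]
  exact Continuous.finset_inf'_apply univ_nonempty fun i _ => hf i

lemma IsCompact.lt_ciInf_iff {X β : Type*} [TopologicalSpace X]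
    [ConditionallyCompleteLinearOrder β] [TopologicalSpace β] [ClosedIicTopology β] {s : Set X}
    (hs : IsCompact s) (hne : s.Nonempty) {f : X → β} (hf : Continuous f) {a : β} :
    a < ⨅ x : s, f x ↔ ∀ x ∈ s, a < f x := by
  obtain ⟨x₀, hx₀, hmin⟩ := hs.exists_isMinOn hne hf.continuousOn
  have : Nonempty s := hne.to_subtype
  have hinf : ⨅ x : s, f x = f x₀ :=
    le_antisymm (ciInf_le ⟨f x₀, Set.forall_mem_range.2 fun x : s => hmin x.2⟩ ⟨x₀, hx₀⟩)
      (le_ciInf fun x : s => hmin x.2)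
  rw [hinf]
  exact ⟨fun h x hx => h.trans_le (hmin hx), fun h => h x₀ hx₀⟩

theorem Finset.le_card_iff_forall_not_disjoint {α : Type*} [Fintype α] {k : ℕ}
    (hk : k ≤ Fintype.card α) (t : Finset α) :
    k ≤ #t ↔ ∀ S : Finset α, Fintype.card α - k + 1 ≤ #S → ¬ Disjoint S t := by
  classical
  constructor
  · intro ht S hS hdisj
    have := card_union_of_disjoint hdisj ▸ card_le_univ (S ∪ t)
    omega
  · intro h
    by_contra! ht
    refine h tᶜ ?_ disjoint_compl_left
    rw [card_compl]
    omega

section PositiveSpan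

variable {n : ℕ} {κ : Type*} (E : κ → Euc n)

lemma span_range_eq_top_of_forall_exists_inner_pos
    (H : ∀ u : Euc n, u ≠ 0 → ∃ i, 0 < ⟪u, E i⟫) : Submodule.span ℝ (Set.range E) = ⊤ := by
  by_contra hne
  obtain ⟨u, hu, hu0⟩ := Submodule.exists_mem_ne_zero_of_ne_bot
    (mt Submodule.orthogonal_eq_bot_iff.1 hne)
  obtain ⟨i, hi⟩ := H u hu0
  have : ⟪u, E i⟫ = 0 := (Submodule.mem_orthogonal' _ u).1 hu (E i)
    (Submodule.subset_span (Set.mem_range_self i))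
  exact hi.ne' this

variable [Fintype κ]

lemma zero_mem_pspan : (0 : Euc n) ∈ pspan E :=
  ⟨0, fun _ => le_rfl, by simp⟩

lemma mem_pspan_self_s8 (i : κ) : E i ∈ pspan E := by
  classical
  exact ⟨Pi.single i 1, fun j => by by_cases h : j = i <;> simp [h], by simp [Pi.single_apply]⟩

lemma smul_mem_pspan {t : ℝ} (ht : 0 ≤ t) {x : Euc n} (hx : x ∈ pspan E) : t • x ∈ pspan E := by
  obtain ⟨c, hc, rfl⟩ := hx
  exact ⟨t • c, fun i => mul_nonneg ht (hc i), by simp [Finset.smul_sum, mul_smul]⟩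

lemma convex_pspan : Convex ℝ (pspan E) := by
  rintro _ ⟨c, hc, rfl⟩ _ ⟨d, hd, rfl⟩ a b ha hb -
  refine ⟨a • c + b • d, fun i => ?_, ?_⟩
  · exact add_nonneg (mul_nonneg ha (hc i)) (mul_nonneg hb (hd i))
  · simp [add_smul, mul_smul, Finset.smul_sum, Finset.sum_add_distrib]

lemma interior_pspan_nonempty (hspan : Submodule.span ℝ (Set.range E) = ⊤) :
    (interior (pspan E)).Nonempty := by
  rw [(convex_pspan E).interior_nonempty_iff_affineSpan_eq_top, eq_top_iff]
  have hle : Submodule.span ℝ (Set.range E) ≤ Submodule.span ℝ (pspan E) :=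
    Submodule.span_mono (Set.range_subset_iff.2 (mem_pspan_self_s8 E))
  intro x _
  rw [← Set.insert_eq_of_mem (zero_mem_pspan E), ← SetLike.mem_coe, affineSpan_insert_zero]
  exact hle (hspan ▸ Submodule.mem_top)

lemma le_zero_of_forall_le_on_pspan (f : Euc n →L[ℝ] ℝ) {b : ℝ}
    (hf : ∀ y ∈ pspan E, f y ≤ b) (i : κ) : f (E i) ≤ 0 := by
  by_contra! hpos
  have := hf _ (smul_mem_pspan E (by positivity : 0 ≤ (|b| + 1) / f (E i)) (mem_pspan_self_s8 E i))
  rw [map_smul, smul_eq_mul, div_mul_cancel₀ _ hpos.ne'] at this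
  linarith [le_abs_self b]

theorem pspan_eq_univ_iff :
    pspan E = Set.univ ↔ ∀ u : Euc n, u ≠ 0 → ∃ i, 0 < ⟪u, E i⟫ := by
  constructor
  · intro h u hu
    obtain ⟨c, hc, hcu⟩ : u ∈ pspan E := h ▸ Set.mem_univ u
    have : ∑ i : κ, (0 : ℝ) < ∑ i, c i * ⟪u, E i⟫ := by
      simpa [← real_inner_smul_right, ← inner_sum, ← hcu] using real_inner_self_pos.2 hu
    obtain ⟨i, -, hi⟩ := Finset.exists_lt_of_sum_lt this
    exact ⟨i, pos_of_mul_pos_right hi (hc i)⟩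
  · intro H
    have hint := interior_pspan_nonempty E (span_range_eq_top_of_forall_exists_inner_pos E H)
    refine Set.eq_univ_of_forall fun x => interior_subset (by_contra fun hx => ?_)
    obtain ⟨f, hf⟩ := geometric_hahn_banach_open_point (convex_pspan E).interior isOpen_interior hx
    have hle : ∀ y ∈ pspan E, f y ≤ f x := by
      intro y hy
      have hcl : y ∈ closure (interior (pspan E)) :=
        (convex_pspan E).closure_interior_eq_closure_of_nonempty_interior hint ▸ subset_closure hy
      exact closure_minimal (fun z hz => (hf z hz).le)
        (isClosed_le f.continuous continuous_const) hcl
    set u := (InnerProductSpace.toDual ℝ (Euc n)).symm f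
    have hu : ∀ y, ⟪u, y⟫ = f y := fun y => InnerProductSpace.toDual_symm_apply
    obtain ⟨y, hy⟩ := hint
    have hu0 : u ≠ 0 := by
      rintro h0
      simpa [← hu, h0] using hf y hy
    obtain ⟨i, hi⟩ := H u hu0
    linarith [hu (E i), le_zero_of_forall_le_on_pspan E f hle i]

end PositiveSpan

section PositiveKSpan

variable {n : ℕ} {ι : Type*} [Fintype ι] {k : ℕ} (D : ι → Euc n)

theorem isPkSS_top_iff (hk : k ≤ Fintype.card ι) :
    IsPkSS k D ⊤ ↔ ∀ u : Euc n, u ≠ 0 → k ≤ #{i | 0 < ⟪u, D i⟫} := by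
  classical
  simp only [IsPkSS, pspanK, Submodule.top_coe, Set.iInter_eq_univ, pspan_eq_univ_iff,
    Finset.le_card_iff_forall_not_disjoint hk, Finset.not_disjoint_iff, mem_filter, mem_univ,
    true_and, Subtype.exists, exists_prop]
  exact ⟨fun h u hu S hS => h S hS u hu, fun h S hS u hu => h u hu S hS⟩

end PositiveKSpan

section KCosineMeasure

variable {n : ℕ} {ι : Type*} [Fintype ι] (k : ℕ) (D : ι → Euc n)

-- `cosmK k D` is, by definition, the infimum of `cosmKAt k D` over the unit sphere.
def cosmKAt (u : Euc n) : ℝ :=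
  ⨆ S : {S : Finset ι // S.card = k},
    ⨅ j : {j : ι // j ∈ (S : Finset ι)}, ⟪u, D (j : ι)⟫ / ‖D (j : ι)‖

lemma continuous_cosmKAt : Continuous (cosmKAt k D) :=
  continuous_ciSup_of_finite fun _ => continuous_ciInf_of_finite fun _ =>
    (continuous_id.inner continuous_const).div_const _

variable {k D}

lemma cosmKAt_pos_iff (h0 : ∀ i, D i ≠ 0) (hk1 : 1 ≤ k) (hk2 : k ≤ Fintype.card ι)
    (u : Euc n) : 0 < cosmKAt k D u ↔ k ≤ #{i | 0 < ⟪u, D i⟫} := by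
  classical
  obtain ⟨S₀, -, hS₀⟩ := exists_subset_card_eq (s := univ) (card_univ (α := ι) ▸ hk2)
  have : Nonempty {S : Finset ι // #S = k} := ⟨⟨S₀, hS₀⟩⟩
  have hS (S : Finset ι) (hS : #S = k) : Nonempty {j : ι // j ∈ S} :=
    (card_pos.1 (hS ▸ hk1)).to_subtype
  rw [cosmKAt, lt_ciSup_iff (Set.finite_range _).bddAbove]
  constructor
  · rintro ⟨⟨S, rfl⟩, hpos⟩
    refine card_le_card fun i hi => mem_filter.2 ⟨mem_univ i, ?_⟩
    have := hS S rfl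
    have := lt_ciInf_iff_of_finite.1 hpos ⟨i, hi⟩
    exact (div_pos_iff_of_pos_right (norm_pos_iff.2 (h0 i))).1 this
  · intro hk
    obtain ⟨S, hSpos, hSk⟩ := exists_subset_card_eq hk
    have := hS S hSk
    refine ⟨⟨S, hSk⟩, lt_ciInf_iff_of_finite.2 fun j => ?_⟩
    exact div_pos (mem_filter.1 (hSpos j.2)).2 (norm_pos_iff.2 (h0 j))

omit [Fintype ι] in
lemma filter_inner_smul_pos {c : ℝ} (hc : 0 < c) (s : Finset ι) (u : Euc n) :
    {i ∈ s | 0 < ⟪c • u, D i⟫} = {i ∈ s | 0 < ⟪u, D i⟫} := by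
  simp only [real_inner_smul_left, mul_pos_iff_of_pos_left hc]

theorem cosmK_pos_iff (h0 : ∀ i, D i ≠ 0) (hk1 : 1 ≤ k) (hk2 : k ≤ Fintype.card ι) :
    0 < cosmK k D ↔ ∀ u : Euc n, u ≠ 0 → k ≤ #{i | 0 < ⟪u, D i⟫} := by
  obtain ⟨i₀⟩ : Nonempty ι := Fintype.card_pos_iff.1 (by omega)
  have : Nontrivial (Euc n) := nontrivial_of_ne (D i₀) 0 (h0 i₀)
  have hcpt : IsCompact {u : Euc n | ‖u‖ = 1} := by
    simpa only [Metric.sphere, dist_zero_right] using isCompact_sphere (0 : Euc n) 1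
  have hne : {u : Euc n | ‖u‖ = 1}.Nonempty := exists_norm_eq (Euc n) zero_le_one
  refine (hcpt.lt_ciInf_iff hne (continuous_cosmKAt k D)).trans ?_
  simp only [Set.mem_ofPred_eq, cosmKAt_pos_iff h0 hk1 hk2]
  refine ⟨fun h u hu => ?_, fun h u hu => h u (norm_ne_zero_iff.1 (hu ▸ one_ne_zero))⟩
  have hunit : ‖‖u‖⁻¹ • u‖ = 1 := by simpa using norm_smul_inv_norm (𝕜 := ℝ) hu
  simpa only [filter_inner_smul_pos (inv_pos.2 (norm_pos_iff.2 hu))] using h _ hunit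

end KCosineMeasure

/-- Theorem 4.8: a finite family `D` of nonzero vectors of `ℝ^n`
is a positive `k`-spanning set of `ℝ^n` iff its `k`-cosine measure is positive. -/
theorem pkss_iff_cosmK_pos {n : ℕ} {ι : Type*} [Fintype ι]
    (D : ι → Euc n) (h0 : ∀ i, D i ≠ 0)
    (k : ℕ) (hk1 : 1 ≤ k) (hk2 : k ≤ Fintype.card ι) :
    IsPkSS k D (⊤ : Submodule ℝ (Euc n)) ↔ 0 < cosmK k D := by
  rw [isPkSS_top_iff D hk2, cosmK_pos_iff h0 hk1 hk2]
end
end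

section
/- Let D be a nonempty finite family of nonzero vectors in ℝ^n and let k be an integer with 1 ≤ k ≤ |D|. Then the k-cosine measure of D equals the minimum of the cosine measures of its subfamilies of cardinality |D| - k + 1: cm_k(D) = min { cm(S) : S ⊆ D, |S| = |D| - k + 1 }. -/
open scoped RealInnerProductSpace

noncomputable section

/-
Fix a unit vector `u` and put `f i = uᵀdᵢ/‖dᵢ‖`. The largest minimum of `f` over `k`-element
subfamilies equals the smallest maximum of `f` over `(|D| - k + 1)`-element subfamilies (both
are the `k`-th largest value of `f`): two such subfamilies always meet, and if fewer than `k`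
values of `f` reach a level `t`, the other indices contain a `(|D| - k + 1)`-element subfamily
whose maximum is below `t`. Exchanging the infimum over `u` with the infimum over subfamilies
then yields the minimum of their cosine measures.
-/

section Minimax

variable {α ι : Type*} [ConditionallyCompleteLinearOrder α] [Fintype ι] (f : ι → α)

theorem ciInf_le_ciSup_of_card_lt_card_add_card {S T : Finset ι}
    (h : Fintype.card ι < S.card + T.card) :
    ⨅ j : {j // j ∈ S}, f j ≤ ⨆ j : {j // j ∈ T}, f j := by
  classical
  obtain ⟨j, hj⟩ := Finset.inter_nonempty_of_card_lt_card_add_card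
    (Finset.subset_univ S) (Finset.subset_univ T) (by rwa [Finset.card_univ])
  rw [Finset.mem_inter] at hj
  exact (ciInf_le (f := fun j : {j // j ∈ S} => f j) (Set.finite_range _).bddBelow
    ⟨j, hj.1⟩).trans
    (le_ciSup (f := fun j : {j // j ∈ T} => f j) (Set.finite_range _).bddAbove ⟨j, hj.2⟩)

theorem exists_card_eq_forall_le_or_exists_card_eq_forall_lt (t : α) {k : ℕ}
    (hk : k ≤ Fintype.card ι) :
    (∃ S : Finset ι, S.card = k ∧ ∀ j ∈ S, t ≤ f j) ∨
      ∃ T : Finset ι, T.card = Fintype.card ι - k + 1 ∧ ∀ j ∈ T, f j < t := by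
  classical
  set A := Finset.univ.filter fun j => t ≤ f j
  by_cases hA : k ≤ A.card
  · obtain ⟨S, hSA, hS⟩ := Finset.exists_subset_card_eq hA
    exact .inl ⟨S, hS, fun j hj => (Finset.mem_filter.mp (hSA hj)).2⟩
  · have hAc : Fintype.card ι - k + 1 ≤ Aᶜ.card := by
      rw [Finset.card_compl]
      omega
    obtain ⟨T, hTA, hT⟩ := Finset.exists_subset_card_eq hAc
    refine .inr ⟨T, hT, fun j hj => ?_⟩
    simpa [A] using hTA hj

theorem ciSup_ciInf_card_eq_eq_ciInf_ciSup_card_eq {k : ℕ} (hk1 : 1 ≤ k)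
    (hk2 : k ≤ Fintype.card ι) :
    ⨆ S : {S : Finset ι // S.card = k}, ⨅ j : {j // j ∈ (S : Finset ι)}, f j
      = ⨅ T : {T : Finset ι // T.card = Fintype.card ι - k + 1},
          ⨆ j : {j // j ∈ (T : Finset ι)}, f j := by
  have nonempty_of_card_eq {m : ℕ} (hm : 1 ≤ m) (hmN : m ≤ Fintype.card ι) :
      Nonempty {S : Finset ι // S.card = m} := by
    obtain ⟨S, -, hS⟩ := Finset.exists_subset_card_eq (s := Finset.univ) (by simpa using hmN)
    exact ⟨⟨S, hS⟩⟩
  have nonempty_mem {m : ℕ} (hm : 1 ≤ m) (S : {S : Finset ι // S.card = m}) :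
      Nonempty {j // j ∈ (S : Finset ι)} :=
    (Finset.card_pos.mp (by omega : 0 < (S : Finset ι).card)).to_subtype
  have := nonempty_of_card_eq hk1 hk2
  have := nonempty_of_card_eq (m := Fintype.card ι - k + 1) (by omega) (by omega)
  refine le_antisymm (ciSup_le fun S => ?_) ?_
  · have := nonempty_mem hk1 S
    exact le_ciInf fun T =>
      ciInf_le_ciSup_of_card_lt_card_add_card f (by rw [S.2, T.2]; omega)
  · rcases exists_card_eq_forall_le_or_exists_card_eq_forall_lt f
      (⨅ T : {T : Finset ι // T.card = Fintype.card ι - k + 1},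
        ⨆ j : {j // j ∈ (T : Finset ι)}, f j) hk2 with ⟨S, hS, hSle⟩ | ⟨T, hT, hTlt⟩
    · have := nonempty_mem hk1 ⟨S, hS⟩
      exact (le_ciInf fun j : {j // j ∈ S} => hSle j j.2).trans
        (le_ciSup (f := fun S : {S : Finset ι // S.card = k} =>
          ⨅ j : {j // j ∈ (S : Finset ι)}, f j) (Set.finite_range _).bddAbove ⟨S, hS⟩)
    · have := nonempty_mem (by omega) ⟨T, hT⟩
      obtain ⟨j, hj⟩ := exists_eq_ciSup_of_finite (f := fun j : {j // j ∈ T} => f j)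
      have hle := ciInf_le (f := fun T : {T : Finset ι // T.card = Fintype.card ι - k + 1} =>
          ⨆ j : {j // j ∈ (T : Finset ι)}, f j) (Set.finite_range _).bddBelow ⟨T, hT⟩
      exact absurd (hTlt j j.2) (not_lt.mpr (hj ▸ hle))

end Minimax

theorem ciInf_comm {α β γ : Type*} [ConditionallyCompleteLattice α] {f : β → γ → α}
    (hf : BddBelow (Set.range fun p : β × γ => f p.1 p.2)) :
    ⨅ b, ⨅ c, f b c = ⨅ c, ⨅ b, f b c := by
  have hf' : BddBelow (Set.range fun p : γ × β => f p.2 p.1) := by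
    rwa [← Prod.swap_surjective.range_comp]
  rw [← ciInf_prod (f := fun p : β × γ => f p.1 p.2) hf,
    ← ciInf_prod (f := fun p : γ × β => f p.2 p.1) hf',
    ← (Equiv.prodComm γ β).iInf_comp]
  rfl

theorem neg_one_le_real_inner_div_norm {E : Type*} [NormedAddCommGroup E]
    [InnerProductSpace ℝ E] {u : E} (hu : ‖u‖ = 1) (d : E) : -1 ≤ ⟪u, d⟫ / ‖d‖ := by
  have := abs_le.mp (abs_real_inner_div_norm_mul_norm_le_one u d)
  rw [hu, one_mul] at this
  exact this.1

theorem cosmK_eq_min_cosm_general {n : ℕ} {ι : Type*} [Fintype ι]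
    (D : ι → Euc n) (k : ℕ) (hk1 : 1 ≤ k) (hk2 : k ≤ Fintype.card ι) :
    cosmK k D = ⨅ S : {S : Finset ι // S.card = Fintype.card ι - k + 1},
      cosm (fun j : {j : ι // j ∈ (S : Finset ι)} => D (j : ι)) := by
  have hbdd : BddBelow (Set.range
      fun p : {u : Euc n // ‖u‖ = 1} × {T : Finset ι // T.card = Fintype.card ι - k + 1} =>
        ⨆ j : {j // j ∈ (p.2 : Finset ι)}, ⟪(p.1 : Euc n), D j⟫ / ‖D j‖) := by
    refine ⟨-1, Set.forall_mem_range.mpr fun ⟨u, T⟩ => ?_⟩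
    obtain ⟨j, hj⟩ := Finset.card_pos.mp (by omega : 0 < (T : Finset ι).card)
    exact (neg_one_le_real_inner_div_norm u.2 (D j)).trans
      (le_ciSup (f := fun j : {j // j ∈ (T : Finset ι)} => ⟪(u : Euc n), D j⟫ / ‖D j‖)
        (Set.finite_range _).bddAbove ⟨j, hj⟩)
  unfold cosmK cosm
  rw [← ciInf_comm hbdd]
  exact iInf_congr fun u => ciSup_ciInf_card_eq_eq_ciInf_ciSup_card_eq
    (fun i => ⟪(u : Euc n), D i⟫ / ‖D i‖) hk1 hk2

/-- Theorem 4.9: the `k`-cosine measure of `D` equals the minimum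
of the cosine measures of its subfamilies of cardinality `|D| - k + 1`. -/
theorem cosmK_eq_min_cosm {n : ℕ} {ι : Type*} [Fintype ι] [Nonempty ι]
    (D : ι → Euc n) (h0 : ∀ i, D i ≠ 0)
    (k : ℕ) (hk1 : 1 ≤ k) (hk2 : k ≤ Fintype.card ι) :
    cosmK k D = ⨅ S : {S : Finset ι // S.card = Fintype.card ι - k + 1},
      cosm (fun j : {j : ι // j ∈ (S : Finset ι)} => D (j : ι)) :=
  cosmK_eq_min_cosm_general D k hk1 hk2
end
end

section
/- Let 𝕃 be an ℓ-dimensional linear subspace of ℝ^n (ℓ ≥ 1) and let D = {d_1, …, d_{ℓ+1}} be a minimal positive basis of 𝕃. Then there exist vectors v_1, …, v_{ℓ+1} ∈ 𝕃 such that d_iᵀ v_i > 0 for all i ∈ {1,…,ℓ+1}, and d_iᵀ v_j < 0 for all 1 ≤ j < i ≤ ℓ+1. -/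
open scoped RealInnerProductSpace

noncomputable section

/-! The sum `-(d_1 + ⋯ + d_{ℓ+1})` lies in `𝕃`, hence in the positive span of `D`; this yields a
linear relation `∑ αᵢ dᵢ = 0` with all `αᵢ > 0`. By the relation, a vector of `𝕃` orthogonal to
the `dᵢ`, `i ≠ j`, is orthogonal to `dⱼ` as well, hence zero because `D` spans `𝕃`. So the `ℓ`
functionals `⟪dᵢ, ·⟫`, `i ≠ j`, are independent on `𝕃` and some `vⱼ ∈ 𝕃` has `⟪dᵢ, vⱼ⟫ = -1`
for all `i ≠ j`. Pairing the relation with `vⱼ` gives `αⱼ ⟪dⱼ, vⱼ⟫ = ∑_{i ≠ j} αᵢ > 0`. -/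

open Finset

section InnerProductSpace

variable {E : Type*} [NormedAddCommGroup E] [InnerProductSpace ℝ E]

theorem Submodule.exists_mem_forall_inner_eq (L : Submodule ℝ E) [FiniteDimensional ℝ L]
    {κ : Type*} [Fintype κ] (w : κ → E) (hcard : Fintype.card κ = Module.finrank ℝ L)
    (hw : ∀ x ∈ L, (∀ k, ⟪w k, x⟫ = 0) → x = 0) (t : κ → ℝ) :
    ∃ x ∈ L, ∀ k, ⟪w k, x⟫ = t k := by
  let φ : L →ₗ[ℝ] κ → ℝ := LinearMap.pi fun k => (innerₗ E (w k)).comp L.subtype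
  have hinj : Function.Injective φ := by
    rw [← LinearMap.ker_eq_bot, Submodule.eq_bot_iff]
    rintro ⟨x, hx⟩ hφ
    exact Subtype.ext (hw x hx fun k => congrFun hφ k)
  obtain ⟨x, hx⟩ := (LinearMap.injective_iff_surjective_of_finrank_eq_finrank
    (by rw [Module.finrank_fintype_fun_eq_card, hcard])).mp hinj t
  exact ⟨x, x.2, fun k => congrFun hx k⟩

theorem eq_zero_of_mem_span_of_forall_inner_eq_zero {ι : Type*} [Fintype ι] {D : ι → E} {x : E}
    (hx : x ∈ Submodule.span ℝ (Set.range D)) (h : ∀ i, ⟪D i, x⟫ = 0) : x = 0 := by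
  obtain ⟨c, rfl⟩ := (Submodule.mem_span_range_iff_exists_fun ℝ).mp hx
  rw [← inner_self_eq_zero (𝕜 := ℝ), sum_inner]
  simp [real_inner_smul_left, h]

variable {ι : Type*} [Fintype ι] [DecidableEq ι] {D : ι → E} {α : ι → ℝ}

theorem mul_inner_eq_neg_sum_erase (hrel : ∑ i, α i • D i = 0) (j : ι) (x : E) :
    α j * ⟪D j, x⟫ = -∑ i ∈ univ.erase j, α i * ⟪D i, x⟫ := by
  have h := congrArg (⟪·, x⟫) hrel
  simp only [sum_inner, real_inner_smul_left, inner_zero_left] at h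
  rw [← add_sum_erase _ _ (mem_univ j)] at h
  linarith

theorem inner_eq_zero_of_forall_ne (hrel : ∑ i, α i • D i = 0) {j : ι} (hαj : α j ≠ 0) {x : E}
    (hx : ∀ i ≠ j, ⟪D i, x⟫ = 0) : ⟪D j, x⟫ = 0 := by
  have h := mul_inner_eq_neg_sum_erase hrel j x
  rw [sum_eq_zero fun i hi => by rw [hx i (ne_of_mem_erase hi), mul_zero], neg_zero] at h
  exact (mul_eq_zero.mp h).resolve_left hαj

theorem inner_pos_of_forall_ne (hrel : ∑ i, α i • D i = 0) (hα : ∀ i, 0 < α i) {j : ι}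
    (hj : ∃ i, i ≠ j) {x : E} (hx : ∀ i ≠ j, ⟪D i, x⟫ < 0) : 0 < ⟪D j, x⟫ := by
  have hsum : 0 < -∑ i ∈ univ.erase j, α i * ⟪D i, x⟫ := by
    obtain ⟨i, hi⟩ := hj
    rw [← sum_neg_distrib]
    exact sum_pos (fun k hk => by nlinarith [hα k, hx k (ne_of_mem_erase hk)])
      ⟨i, mem_erase.mpr ⟨hi, mem_univ i⟩⟩
  rw [← mul_inner_eq_neg_sum_erase hrel] at hsum
  exact pos_of_mul_pos_right hsum (hα j).le

end InnerProductSpace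

namespace IsPSS

variable {n : ℕ} {ι : Type*} [Fintype ι] {D : ι → Euc n} {L : Submodule ℝ (Euc n)}

theorem exists_eq_sum (h : IsPSS D L) {x : Euc n} (hx : x ∈ L) :
    ∃ c : ι → ℝ, (∀ i, 0 ≤ c i) ∧ x = ∑ i, c i • D i := by
  rw [← SetLike.mem_coe, ← h] at hx
  exact hx

theorem mem_s14 (h : IsPSS D L) (i : ι) : D i ∈ L := by
  classical
  rw [← SetLike.mem_coe, ← h]
  exact ⟨Pi.single i 1, fun k => by by_cases hk : k = i <;> simp [hk],
    by simp [Pi.single_apply, ite_smul]⟩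

theorem le_span (h : IsPSS D L) : L ≤ Submodule.span ℝ (Set.range D) := fun x hx => by
  obtain ⟨c, -, rfl⟩ := h.exists_eq_sum hx
  exact Submodule.sum_mem _ fun i _ => Submodule.smul_mem _ _ (Submodule.subset_span ⟨i, rfl⟩)

theorem exists_pos_relation (h : IsPSS D L) :
    ∃ α : ι → ℝ, (∀ i, 0 < α i) ∧ ∑ i, α i • D i = 0 := by
  obtain ⟨c, hc, hsum⟩ := h.exists_eq_sum (neg_mem (L.sum_mem fun i (_ : i ∈ univ) => h.mem_s14 i))
  refine ⟨c + 1, fun i => by simp [add_pos_of_nonneg_of_pos (hc i)], ?_⟩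
  simp only [Pi.add_apply, Pi.one_apply, add_smul, one_smul, sum_add_distrib, ← hsum,
    neg_add_cancel]

theorem exists_mem_forall_ne_inner_eq [DecidableEq ι] (h : IsPSS D L)
    (hcard : Fintype.card ι = Module.finrank ℝ L + 1) (j : ι) (t : ι → ℝ) :
    ∃ x ∈ L, ∀ i ≠ j, ⟪D i, x⟫ = t i := by
  obtain ⟨α, hα, hrel⟩ := h.exists_pos_relation
  have hsep : ∀ x ∈ L, (∀ i : {i // i ≠ j}, ⟪D i, x⟫ = 0) → x = 0 := fun x hxL hx => by
    have hj := inner_eq_zero_of_forall_ne hrel (hα j).ne' fun i hi => hx ⟨i, hi⟩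
    refine eq_zero_of_mem_span_of_forall_inner_eq_zero (h.le_span hxL) fun i => ?_
    by_cases hij : i = j
    · exact hij ▸ hj
    · exact hx ⟨i, hij⟩
  obtain ⟨x, hxL, hx⟩ := L.exists_mem_forall_inner_eq (fun i : {i // i ≠ j} => D i)
    (by simp [Fintype.card_subtype_compl, hcard]) hsep (fun i => t i)
  exact ⟨x, hxL, fun i hi => hx ⟨i, hi⟩⟩

end IsPSS

theorem minimal_pb_strict_separation_general {n ℓ : ℕ} (hℓ : 1 ≤ ℓ)
    (L : Submodule ℝ (Euc n))
    (D : Fin (ℓ + 1) → Euc n)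
    (hD : IsMinPosBasis D L) :
    ∃ v : Fin (ℓ + 1) → Euc n, (∀ i, v i ∈ L) ∧
      (∀ i, 0 < ⟪D i, v i⟫) ∧
      ∀ i j : Fin (ℓ + 1), j < i → ⟪D i, v j⟫ < 0 := by
  obtain ⟨⟨hPSS, -⟩, hcard⟩ := hD
  obtain ⟨α, hα, hrel⟩ := hPSS.exists_pos_relation
  choose v hvL hv using fun j => hPSS.exists_mem_forall_ne_inner_eq hcard j fun _ => -1
  have : Nontrivial (Fin (ℓ + 1)) := Fin.nontrivial_iff_two_le.mpr (by omega)
  refine ⟨v, hvL, fun j => ?_, fun i j hji => by rw [hv j i hji.ne']; norm_num⟩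
  exact inner_pos_of_forall_ne hrel hα (exists_ne j) fun i hi => by rw [hv j i hi]; norm_num

/-- Lemma 4.12: for a minimal positive basis `{d_1, …, d_{ℓ+1}}`
of an `ℓ`-dimensional subspace `L` of `ℝ^n`, there exist `v_1, …, v_{ℓ+1} ∈ L`
with `⟪d_i, v_i⟫ > 0` for all `i` and `⟪d_i, v_j⟫ < 0` whenever `j < i`. -/
theorem minimal_pb_strict_separation {n ℓ : ℕ} (hℓ : 1 ≤ ℓ) (hn : ℓ ≤ n)
    (L : Submodule ℝ (Euc n)) (hdim : Module.finrank ℝ L = ℓ)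
    (D : Fin (ℓ + 1) → Euc n) (h0 : ∀ i, D i ≠ 0)
    (hD : IsMinPosBasis D L) :
    ∃ v : Fin (ℓ + 1) → Euc n, (∀ i, v i ∈ L) ∧
      (∀ i, 0 < ⟪D i, v i⟫) ∧
      ∀ i j : Fin (ℓ + 1), j < i → ⟪D i, v j⟫ < 0 :=
  minimal_pb_strict_separation_general hℓ L D hD
end
end

section
/- Let D be a nonempty finite family of nonzero vectors in ℝ^n. Then D is a positive spanning set of ℝ^n if and only if cm(D) > 0. -/
open scoped RealInnerProductSpace

noncomputable section

/-!
Write `cosineMax D u = max_i ⟪u, d_i⟫ / ‖d_i‖`, so that `cosm D` is its infimum over the unit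
sphere. If `D` positively spans, every unit `u` is `∑ c_i d_i` with `c_i ≥ 0`, so
`1 = ∑ c_i ⟪u, d_i⟫` forces `cosineMax D u > 0`; this continuous function attains its minimum
on the compact sphere, which is `cosm D`. Conversely, if some `x` with `‖x‖ ≤ cosm D` lay outside
the convex hull of the normalized `d_i`, a separating hyperplane with normal `v` would give
`cosm D * ‖v‖ ≤ cosineMax D v < ⟪v, x⟫ ≤ ‖v‖ * cosm D`. So that hull, which lies in the positive
span, contains a ball of radius `cosm D` around `0`, and the positive span is a cone.
-/

namespace PositiveSpanning

variable {n : ℕ} {ι : Type*} (D : ι → Euc n)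

def cosineMax (u : Euc n) : ℝ :=
  ⨆ i, ⟪u, D i⟫ / ‖D i‖

lemma cosineMax_zero [Nonempty ι] : cosineMax D 0 = 0 := by
  simp [cosineMax]

lemma cosineMax_smul {t : ℝ} (ht : 0 ≤ t) (u : Euc n) :
    cosineMax D (t • u) = t * cosineMax D u := by
  simp only [cosineMax, Real.mul_iSup_of_nonneg ht, real_inner_smul_left, mul_div_assoc]

variable [Fintype ι]

lemma smul_mem_pspan {x : Euc n} (hx : x ∈ pspan D) {t : ℝ} (ht : 0 ≤ t) :
    t • x ∈ pspan D := by
  obtain ⟨c, hc, rfl⟩ := hx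
  exact ⟨fun i => t * c i, fun i => mul_nonneg ht (hc i), by
    simp only [Finset.smul_sum, mul_smul]⟩

lemma convex_pspan : Convex ℝ (pspan D) := by
  rintro x ⟨c, hc, rfl⟩ y ⟨c', hc', rfl⟩ a b ha hb -
  refine ⟨fun i => a * c i + b * c' i,
    fun i => add_nonneg (mul_nonneg ha (hc i)) (mul_nonneg hb (hc' i)), ?_⟩
  simp only [Finset.smul_sum, add_smul, mul_smul, ← Finset.sum_add_distrib]

lemma smul_apply_mem_pspan (i : ι) (t : ℝ) (ht : 0 ≤ t) : t • D i ∈ pspan D := by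
  classical
  refine ⟨Pi.single i t, fun j => ?_, by simp⟩
  by_cases h : j = i <;> simp [h, ht]

lemma convexHull_normalize_subset_pspan :
    convexHull ℝ (Set.range fun i => ‖D i‖⁻¹ • D i) ⊆ pspan D :=
  convexHull_min (Set.range_subset_iff.2 fun i => smul_apply_mem_pspan D i _ (by positivity))
    (convex_pspan D)

lemma le_cosineMax (u : Euc n) (i : ι) : ⟪u, D i⟫ / ‖D i‖ ≤ cosineMax D u :=
  le_ciSup (f := fun i => ⟪u, D i⟫ / ‖D i‖) (Set.finite_range _).bddAbove i

lemma cosineMax_lt_iff [Nonempty ι] {u : Euc n} {a : ℝ} :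
    cosineMax D u < a ↔ ∀ i, ⟪u, D i⟫ / ‖D i‖ < a := by
  refine ⟨fun h i => (le_cosineMax D u i).trans_lt h, fun h => ?_⟩
  obtain ⟨i, hi⟩ := exists_eq_ciSup_of_finite (f := fun i => ⟪u, D i⟫ / ‖D i‖)
  rw [cosineMax, ← hi]
  exact h i

lemma neg_norm_le_cosineMax [Nonempty ι] (u : Euc n) : -‖u‖ ≤ cosineMax D u := by
  obtain ⟨i⟩ := ‹Nonempty ι›
  refine le_trans ?_ (le_cosineMax D u i)
  rcases eq_or_ne (D i) 0 with h | h
  · simp [h]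
  · rw [le_div_iff₀ (norm_pos_iff.2 h), neg_mul, neg_le]
    exact (neg_le_abs _).trans (abs_real_inner_le_norm u (D i))

lemma continuous_cosineMax [Nonempty ι] : Continuous (cosineMax D) := by
  have : cosineMax D = fun u => Finset.univ.sup' Finset.univ_nonempty
      (fun i => ⟪u, D i⟫ / ‖D i‖) := by
    funext u
    exact (Finset.sup'_univ_eq_ciSup _).symm
  rw [this]
  exact Continuous.finset_sup'_apply _ fun i _ => (continuous_id.inner continuous_const).div_const _

lemma cosm_eq_iInf_cosineMax :
    cosm D = ⨅ u : {u : Euc n // ‖u‖ = 1}, cosineMax D u :=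
  rfl

lemma cosm_le_cosineMax [Nonempty ι] {u : Euc n} (hu : ‖u‖ = 1) : cosm D ≤ cosineMax D u := by
  rw [cosm_eq_iInf_cosineMax]
  refine ciInf_le (f := fun v : {u : Euc n // ‖u‖ = 1} => cosineMax D v) ⟨-1, ?_⟩ ⟨u, hu⟩
  rintro _ ⟨v, rfl⟩
  simpa [v.2] using neg_norm_le_cosineMax D (v : Euc n)

lemma cosm_mul_norm_le_cosineMax [Nonempty ι] (v : Euc n) : cosm D * ‖v‖ ≤ cosineMax D v := by
  rcases eq_or_ne v 0 with rfl | hv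
  · simp [cosineMax_zero]
  have hv' : 0 < ‖v‖ := norm_pos_iff.2 hv
  have h := cosm_le_cosineMax D (u := ‖v‖⁻¹ • v) (by simp [norm_smul, hv'.ne'])
  rw [cosineMax_smul D (by positivity)] at h
  rwa [le_inv_mul_iff₀ hv', mul_comm] at h

lemma exists_cosineMax_eq_cosm [Nonempty ι] [Nontrivial (Euc n)] :
    ∃ u : Euc n, ‖u‖ = 1 ∧ cosineMax D u = cosm D := by
  obtain ⟨u, hu, hmin⟩ := (isCompact_sphere (0 : Euc n) 1).exists_isMinOn
    (NormedSpace.sphere_nonempty.2 zero_le_one) (continuous_cosineMax D).continuousOn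
  have hu' : ‖u‖ = 1 := mem_sphere_zero_iff_norm.1 hu
  refine ⟨u, hu', le_antisymm ?_ (cosm_le_cosineMax D hu')⟩
  have : Nonempty {u : Euc n // ‖u‖ = 1} := ⟨⟨u, hu'⟩⟩
  exact le_ciInf fun v => hmin (mem_sphere_zero_iff_norm.2 v.2)

lemma cosineMax_pos_of_mem_pspan {u : Euc n} (hu : u ∈ pspan D) (hu0 : u ≠ 0) :
    0 < cosineMax D u := by
  obtain ⟨c, hc, hsum⟩ := hu
  obtain ⟨i, hi⟩ : ∃ i, 0 < ⟪u, D i⟫ := by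
    by_contra! h
    have : ⟪u, u⟫ ≤ 0 := calc
      ⟪u, u⟫ = ⟪u, ∑ i, c i • D i⟫ := congrArg _ hsum
      _ = ∑ i, c i * ⟪u, D i⟫ := by simp only [inner_sum, real_inner_smul_right]
      _ ≤ 0 := Finset.sum_nonpos fun i _ => mul_nonpos_of_nonneg_of_nonpos (hc i) (h i)
    exact hu0 (real_inner_self_nonpos.1 this)
  have hDi : D i ≠ 0 := by rintro h; simp [h] at hi
  exact (div_pos hi (norm_pos_iff.2 hDi)).trans_le (le_cosineMax D u i)

lemma closedBall_cosm_subset_convexHull [Nonempty ι] :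
    Metric.closedBall 0 (cosm D) ⊆ convexHull ℝ (Set.range fun i => ‖D i‖⁻¹ • D i) := by
  intro x hx
  rw [mem_closedBall_zero_iff] at hx
  by_contra hxK
  obtain ⟨f, a, hf, haf⟩ := geometric_hahn_banach_closed_point (convex_convexHull ℝ _)
    ((Set.finite_range _).isClosed_convexHull (𝕜 := ℝ)) hxK
  set v := (InnerProductSpace.toDual ℝ (Euc n)).symm f
  have hv : ∀ y, f y = ⟪v, y⟫ := fun y => InnerProductSpace.toDual_symm_apply.symm
  have hlt : cosineMax D v < ⟪v, x⟫ := by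
    refine (cosineMax_lt_iff D).2 fun i => ?_
    have := hf _ (subset_convexHull ℝ _ ⟨i, rfl⟩)
    rw [hv, real_inner_smul_right] at this
    rw [hv] at haf
    rw [div_eq_inv_mul]
    linarith
  have := calc cosm D * ‖v‖ ≤ cosineMax D v := cosm_mul_norm_le_cosineMax D v
    _ < ⟪v, x⟫ := hlt
    _ ≤ ‖v‖ * ‖x‖ := real_inner_le_norm v x
    _ ≤ ‖v‖ * cosm D := by gcongr
  linarith

lemma pspan_eq_univ_of_cosm_pos [Nonempty ι] (h : 0 < cosm D) : pspan D = Set.univ := by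
  refine Set.eq_univ_of_forall fun x => ?_
  rcases eq_or_ne x 0 with rfl | hx
  · simpa using smul_apply_mem_pspan D (Classical.arbitrary ι) 0 le_rfl
  have hx' : 0 < ‖x‖ := norm_pos_iff.2 hx
  have hy : (cosm D / ‖x‖) • x ∈ pspan D :=
    convexHull_normalize_subset_pspan D <| closedBall_cosm_subset_convexHull D <| by
      simp [norm_smul, abs_of_pos h, hx'.ne']
  simpa [smul_smul, hx'.ne', h.ne'] using smul_mem_pspan D hy (t := ‖x‖ / cosm D) (by positivity)

lemma cosm_pos_of_pspan_eq_univ [Nonempty ι] [Nontrivial (Euc n)] (h : pspan D = Set.univ) :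
    0 < cosm D := by
  obtain ⟨u, hu, hcos⟩ := exists_cosineMax_eq_cosm D
  exact hcos ▸ cosineMax_pos_of_mem_pspan D (h ▸ Set.mem_univ u) (by rintro rfl; simp at hu)

end PositiveSpanning

/-- Proposition 2.10: a nonempty finite family of nonzero vectors
is a positive spanning set of `ℝ^n` iff its cosine measure is positive. -/
theorem pss_iff_cosm_pos {n : ℕ} {ι : Type*} [Fintype ι] [Nonempty ι]
    (D : ι → Euc n) (h0 : ∀ i, D i ≠ 0) :
    IsPSS D (⊤ : Submodule ℝ (Euc n)) ↔ 0 < cosm D := by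
  have : Nontrivial (Euc n) := ⟨⟨D (Classical.arbitrary ι), 0, h0 _⟩⟩
  rw [IsPSS, Submodule.top_coe]
  exact ⟨PositiveSpanning.cosm_pos_of_pspan_eq_univ D,
    PositiveSpanning.pspan_eq_univ_of_cosm_pos D⟩
end
end
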